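/- arXiv:1506.06819 — 3 statements merged into one kernel-verified Lean document; each statement's English description precedes it below -/
import Mathlib

section
/- Let n ≥ 2 and let x_1,…,x_n be indeterminates. Then, in the polynomial ring ℤ[x_1,…,x_n], the sum over all spanning trees T of the complete graph K_n (with vertex set {1,…,n}) of the monomial ∏_{i=1}^n x_i^{deg_T(i)} equals x_1·x_2⋯x_n·(x_1+x_2+⋯+x_n)^{n−2} (the Cayley–Prüfer formula). -/
open MvPolynomial

/-- `T` is (the edge set of) a spanning tree of `G`: `T ⊆ E(G)` and the graph `(V, T)`
is connected and acyclic. -/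
def IsSpanningTree {V : Type*} (G : SimpleGraph V) (T : Set (Sym2 V)) : Prop :=
  T ⊆ G.edgeSet ∧ (SimpleGraph.fromEdgeSet T).Connected ∧ (SimpleGraph.fromEdgeSet T).IsAcyclic

/-- The degree of the vertex `i` in the edge set `T`: the number of edges of `T`
containing `i`. -/
noncomputable def degIn {V : Type*} (T : Set (Sym2 V)) (i : V) : ℕ :=
  Set.ncard {e ∈ T | i ∈ e}

set_option linter.unusedSectionVars false

namespace CayleyPrufer

open Finset

variable {V : Type*} [DecidableEq V] {S : Finset V} {T : Finset (Sym2 V)}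

/-- Degree of a vertex in a finite edge set. -/
noncomputable def degF (T : Finset (Sym2 V)) (i : V) : ℕ :=
  (T.filter fun e => i ∈ e).card

/-- Trees on a finite vertex set, built by adding leaves. -/
inductive IsT : Finset V → Finset (Sym2 V) → Prop
  | single (v : V) : IsT {v} ∅
  | grow {S : Finset V} {T : Finset (Sym2 V)} (ℓ j : V) : IsT S T → j ∈ S → ℓ ∉ S → IsT (insert ℓ S) (insert s(ℓ, j) T)

lemma IsT.mem_of_mem_edge (h : IsT S T) {e : Sym2 V} (he : e ∈ T) :
    ∀ v ∈ e, v ∈ S := by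
  induction h with
  | single v => simp at he
  | grow ℓ j h hj hl ih =>
      intro v hv
      rcases Finset.mem_insert.1 he with rfl | he'
      · rcases Sym2.mem_iff.1 hv with rfl | rfl
        · exact Finset.mem_insert_self _ _
        · exact Finset.mem_insert_of_mem hj
      · exact Finset.mem_insert_of_mem (ih he' v hv)

lemma IsT.not_isDiag (h : IsT S T) {e : Sym2 V} (he : e ∈ T) : ¬ e.IsDiag := by
  induction h with
  | single v => simp at he
  | grow ℓ j h hj hl ih =>
      rcases Finset.mem_insert.1 he with rfl | he'
      · rw [Sym2.mk_isDiag_iff]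
        rintro rfl
        exact hl hj
      · exact ih he'

lemma IsT.nonempty (h : IsT S T) : S.Nonempty := by
  induction h with
  | single v => exact Finset.singleton_nonempty v
  | grow ℓ j h hj hl ih => exact Finset.insert_nonempty _ _

lemma IsT.card_eq (h : IsT S T) : S.card = T.card + 1 := by
  induction h with
  | single v => simp
  | @grow S T ℓ j h hj hl ih =>
      have he : s(ℓ, j) ∉ T := fun hmem => hl (h.mem_of_mem_edge hmem ℓ (by simp))
      rw [Finset.card_insert_of_notMem hl, Finset.card_insert_of_notMem he, ih]

lemma degF_insert {T : Finset (Sym2 V)} {e : Sym2 V} (he : e ∉ T) (i : V) :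
    degF (insert e T) i = (if i ∈ e then 1 else 0) + degF T i := by
  classical
  unfold degF
  rw [Finset.filter_insert]
  split_ifs with h
  · rw [Finset.card_insert_of_notMem (by simp [he])]; omega
  · rw [Nat.zero_add]

lemma degF_eq_zero (h : IsT S T) {i : V} (hi : i ∉ S) : degF T i = 0 := by
  classical
  unfold degF
  rw [Finset.card_eq_zero, Finset.filter_eq_empty_iff]
  exact fun {e} heT hie => hi (h.mem_of_mem_edge heT i hie)

lemma degF_pos' (h : IsT S T) : 2 ≤ S.card → ∀ i ∈ S, 1 ≤ degF T i := by
  induction h with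
  | single v => intro hS; simp at hS
  | @grow S T ℓ j h hj hl ih =>
      intro _ i hi
      have hne : s(ℓ, j) ∉ T := fun hmem => hl (h.mem_of_mem_edge hmem ℓ (by simp))
      rw [degF_insert hne]
      rcases Finset.mem_insert.1 hi with rfl | hi'
      · simp
      · rcases Nat.lt_or_ge S.card 2 with h1 | h2
        · have h0 : 1 ≤ S.card := Finset.card_pos.2 h.nonempty
          have hc : S.card = 1 := by omega
          obtain ⟨v, hv⟩ := Finset.card_eq_one.1 hc
          subst hv
          simp only [Finset.mem_singleton] at hi' hj
          subst hi'
          subst hj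
          simp
        · exact le_add_of_nonneg_of_le (Nat.zero_le _) (ih h2 i hi')

lemma degF_pos (h : IsT S T) (hS : 2 ≤ S.card) {i : V} (hi : i ∈ S) :
    1 ≤ degF T i := degF_pos' h hS i hi

lemma one_le_degF {e : Sym2 V} (he : e ∈ T) {i : V} (hi : i ∈ e) : 1 ≤ degF T i :=
  Finset.card_pos.2 ⟨e, Finset.mem_filter.2 ⟨he, hi⟩⟩

lemma exists_leaf (h : IsT S T) (hS : 2 ≤ S.card) : ∃ ℓ ∈ S, degF T ℓ = 1 := by
  cases h with
  | single v => simp at hS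
  | @grow S T ℓ j h hj hl =>
      refine ⟨ℓ, Finset.mem_insert_self _ _, ?_⟩
      have hne : s(ℓ, j) ∉ T := fun hm => hl (h.mem_of_mem_edge hm ℓ (by simp))
      rw [degF_insert hne, degF_eq_zero h hl]
      simp

lemma exists_other (h : IsT S T) {e : Sym2 V} (he : e ∈ T) {ℓ : V} (hl : ℓ ∈ e) :
    ∃ j, j ≠ ℓ ∧ e = s(ℓ, j) := by
  induction e with
  | _ a b =>
    have hd := h.not_isDiag he
    rw [Sym2.mk_isDiag_iff] at hd
    rcases Sym2.mem_iff.1 hl with rfl | rfl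
    · exact ⟨b, fun hh => hd hh.symm, rfl⟩
    · exact ⟨a, hd, Sym2.eq_swap⟩

lemma IsT.erase_leaf (h : IsT S T) {ℓ j : V} (hmem : s(ℓ, j) ∈ T)
    (hdeg : degF T ℓ = 1) : IsT (S.erase ℓ) (T.erase s(ℓ, j)) := by
  induction h with
  | single v => simp at hmem
  | @grow S T ℓ₀ j₀ h hj₀ hl₀ ih =>
    have hne : s(ℓ₀, j₀) ∉ T := fun hm => hl₀ (h.mem_of_mem_edge hm ℓ₀ (by simp))
    have hl₀j₀ : ℓ₀ ≠ j₀ := fun hh => hl₀ (hh ▸ hj₀)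
    by_cases hee : s(ℓ, j) = s(ℓ₀, j₀)
    · rcases Sym2.eq_iff.1 hee with ⟨rfl, rfl⟩ | ⟨rfl, rfl⟩
      · rw [Finset.erase_insert hl₀, hee, Finset.erase_insert hne]
        exact h
      · -- ℓ = j₀, j = ℓ₀
        rw [degF_insert hne] at hdeg
        have hjd : degF T ℓ = 0 := by
          have : ℓ ∈ s(j, ℓ) := by simp
          simp only [if_pos this] at hdeg
          omega
        have hcard : S.card = 1 := by
          by_contra hc
          have h2 : 2 ≤ S.card := by
            have := Finset.card_pos.2 h.nonempty; omega
          have := degF_pos h h2 hj₀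
          omega
        obtain ⟨v, hv⟩ := Finset.card_eq_one.1 hcard
        have hT : T = ∅ := by
          have := h.card_eq
          rw [hcard] at this
          exact Finset.card_eq_zero.1 (by omega)
        subst hT hv
        simp only [Finset.mem_singleton] at hj₀
        subst hj₀
        rw [Finset.erase_insert_of_ne (Ne.symm hl₀j₀).symm, hee]
        rw [Finset.erase_insert (by simp)]
        have : Finset.erase {ℓ} ℓ = (∅ : Finset V) := by simp
        rw [this]
        exact IsT.single j
    · have hm : s(ℓ, j) ∈ T := by
        rcases Finset.mem_insert.1 hmem with h' | h'
        · exact absurd h' hee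
        · exact h'
      have hlS : ℓ ∈ S := h.mem_of_mem_edge hm ℓ (by simp)
      have hjS : j ∈ S := h.mem_of_mem_edge hm j (by simp)
      have hll₀ : ℓ ≠ ℓ₀ := fun hh => hl₀ (hh ▸ hlS)
      have hlj₀ : ℓ ≠ j₀ := by
        intro hh
        rw [degF_insert hne] at hdeg
        have h1 := one_le_degF hm (Sym2.mem_mk_left ℓ j)
        have : ℓ ∈ s(ℓ₀, j₀) := by simp [hh]
        simp only [if_pos this] at hdeg
        omega
      have hdeg' : degF T ℓ = 1 := by
        rw [degF_insert hne] at hdeg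
        have : ℓ ∉ s(ℓ₀, j₀) := by
          simp only [Sym2.mem_iff]
          push_neg
          exact ⟨hll₀, hlj₀⟩
        simp only [if_neg this] at hdeg
        omega
      have hrec := ih hm hdeg'
      have hgrow := IsT.grow ℓ₀ j₀ hrec (Finset.mem_erase.2 ⟨fun hh => hlj₀ hh.symm, hj₀⟩)
        (fun hh => hl₀ (Finset.mem_of_mem_erase hh))
      rw [Finset.erase_insert_of_ne (Ne.symm hll₀), Finset.erase_insert_of_ne (Ne.symm hee)]
      exact hgrow

/-- Pick a canonical element of a nonempty finset (depends only on the set). -/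
noncomputable def pick (s : Finset V) (h : s.Nonempty) : V :=
  (Finset.Nonempty.to_subtype h).some.1

lemma pick_mem (s : Finset V) (h : s.Nonempty) : pick s h ∈ s :=
  (Finset.Nonempty.to_subtype h).some.2

lemma pick_congr {s s' : Finset V} (hss : s = s') (h : s.Nonempty) (h' : s'.Nonempty) :
    pick s h = pick s' h' := by subst hss; rfl

/-- Prüfer decoding. -/
noncomputable def decode : Finset V → List V → Finset (Sym2 V)
  | S, [] =>
      if h : S.Nonempty then
        if h2 : (S.erase (pick S h)).Nonempty then
          {s(pick S h, pick _ h2)}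
        else ∅
      else ∅
  | S, j :: t =>
      if h : (S \ (j :: t).toFinset).Nonempty then
        insert s(pick _ h, j) (decode (S.erase (pick _ h)) t)
      else ∅

open scoped Classical in
/-- Prüfer encoding (with fuel). -/
noncomputable def encodeAux : ℕ → Finset V → Finset (Sym2 V) → List V
  | 0, _, _ => []
  | k + 1, S, T =>
      if h : (S.filter fun i => degF T i = 1).Nonempty then
        if hj : ∃ j, j ≠ pick _ h ∧ s(pick _ h, j) ∈ T then
          hj.choose :: encodeAux k (S.erase (pick _ h)) (T.erase s(pick _ h, hj.choose))
        else []
      else []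

lemma degF_empty (i : V) : degF (∅ : Finset (Sym2 V)) i = 0 := by simp [degF]

lemma eq_of_degF_one {ℓ : V} (hdeg : degF T ℓ = 1) {e e' : Sym2 V} (he : e ∈ T) (hle : ℓ ∈ e)
    (he' : e' ∈ T) (hle' : ℓ ∈ e') : e = e' := by
  unfold degF at hdeg
  obtain ⟨f, hf⟩ := Finset.card_eq_one.1 hdeg
  have h1 : e ∈ T.filter fun e => ℓ ∈ e := Finset.mem_filter.2 ⟨he, hle⟩
  have h2 : e' ∈ T.filter fun e => ℓ ∈ e := Finset.mem_filter.2 ⟨he', hle'⟩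
  rw [hf, Finset.mem_singleton] at h1 h2
  rw [h1, h2]

lemma decode_spec : ∀ (s : List V) (S : Finset V), s.length + 2 = S.card →
    (∀ a ∈ s, a ∈ S) →
    IsT S (decode S s) ∧
    (∀ i : V, degF (decode S s) i = (if i ∈ S then 1 else 0) + s.count i) ∧
    encodeAux (S.card - 2) S (decode S s) = s := by
  intro s
  induction s with
  | nil =>
      intro S hlen hmem
      simp only [List.length_nil, Nat.zero_add] at hlen
      have h1 : S.Nonempty := Finset.card_pos.1 (by omega)
      have haS := pick_mem S h1
      set a := pick S h1 with ha
      have h2 : (S.erase a).Nonempty := by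
        rw [← Finset.card_pos, Finset.card_erase_of_mem haS]
        omega
      have hbS := pick_mem _ h2
      set b := pick _ h2 with hb
      have hba : b ≠ a := Finset.ne_of_mem_erase hbS
      have herase : S.erase a = {b} := by
        have hc : (S.erase a).card = 1 := by
          rw [Finset.card_erase_of_mem haS]; omega
        obtain ⟨c, hcc⟩ := Finset.card_eq_one.1 hc
        rw [hcc] at hbS
        rw [hcc, Finset.mem_singleton.1 hbS]
      have hS : S = insert a {b} := by
        rw [← herase, Finset.insert_erase haS]
      have hdec : decode S ([] : List V) = {s(a, b)} := by
        rw [decode, dif_pos h1, dif_pos h2]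
      refine ⟨?_, ?_, ?_⟩
      · rw [hdec, hS]
        have := IsT.grow a b (IsT.single b) (Finset.mem_singleton_self b)
          (by simp [Ne.symm hba])
        simpa using this
      · intro i
        rw [hdec]
        have : ({s(a, b)} : Finset (Sym2 V)) = insert s(a, b) ∅ := rfl
        rw [this, degF_insert (by simp), degF_empty]
        by_cases hi : i ∈ s(a, b)
        · have hiS : i ∈ S := by
            rw [hS]
            rcases Sym2.mem_iff.1 hi with rfl | rfl <;> simp
          simp [hi, hiS]
        · have hiS : i ∉ S := by
            rw [hS]
            simp only [Sym2.mem_iff] at hi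
            push_neg at hi
            simp [hi.1, hi.2]
          simp [hi, hiS]
      · rw [← hlen]
        rfl
  | cons j t ih =>
      intro S hlen hmem
      have hjS : j ∈ S := hmem j (by simp)
      have htS : ∀ a ∈ t, a ∈ S := fun a ha => hmem a (by simp [ha])
      have hcard : S.card = t.length + 3 := by
        simp only [List.length_cons] at hlen; omega
      have hRpos : 0 < (S \ (j :: t).toFinset).card := by
        have h1 := Finset.le_card_sdiff ((j :: t).toFinset) S
        have h2 : (j :: t).toFinset.card ≤ t.length + 1 := by
          simpa using (j :: t).toFinset_card_le
        omega
      have hR : (S \ (j :: t).toFinset).Nonempty := Finset.card_pos.1 hRpos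
      have hℓmem := pick_mem _ hR
      set ℓ := pick _ hR with hℓdef
      have hℓS : ℓ ∈ S := (Finset.mem_sdiff.1 hℓmem).1
      have hℓnot : ℓ ∉ (j :: t).toFinset := (Finset.mem_sdiff.1 hℓmem).2
      have hℓj : ℓ ≠ j := by intro h; exact hℓnot (by simp [h])
      have hℓt : ℓ ∉ t := fun h => hℓnot (by simp [h])
      set S' := S.erase ℓ with hS'def
      have hS'card : S'.card = t.length + 2 := by
        rw [hS'def, Finset.card_erase_of_mem hℓS]; omega
      have ht' : ∀ a ∈ t, a ∈ S' :=
        fun a ha => Finset.mem_erase.2 ⟨fun h => hℓt (h ▸ ha), htS a ha⟩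
      obtain ⟨iT', d2', e3'⟩ := ih S' (by omega) ht'
      set T' := decode S' t with hT'def
      have hjS' : j ∈ S' := Finset.mem_erase.2 ⟨Ne.symm hℓj, hjS⟩
      have heT' : s(ℓ, j) ∉ T' := fun hm =>
        (Finset.mem_erase.1 (iT'.mem_of_mem_edge hm ℓ (by simp))).1 rfl
      have hdec : decode S (j :: t) = insert s(ℓ, j) T' := by
        rw [decode, dif_pos hR]
      have hT : IsT S (insert s(ℓ, j) T') := by
        have := IsT.grow ℓ j iT' hjS' (Finset.notMem_erase ℓ S)
        rwa [Finset.insert_erase hℓS] at this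
      have hdeg : ∀ i : V, degF (insert s(ℓ, j) T') i
          = (if i ∈ S then 1 else 0) + (j :: t).count i := by
        intro i
        rw [degF_insert heT', d2' i]
        by_cases hiℓ : i = ℓ
        · rw [hiℓ]
          have h1 : ℓ ∈ s(ℓ, j) := by simp
          have h2 : ℓ ∉ S' := Finset.notMem_erase ℓ S
          have h3 : (j :: t).count ℓ = 0 := by
            rw [List.count_eq_zero]
            simp [hℓj, hℓt]
          rw [if_pos h1, if_neg h2, if_pos hℓS, h3, List.count_eq_zero.2 hℓt]
        · by_cases hij : i = j
          · subst hij
            have h1 : i ∈ s(ℓ, i) := by simp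
            rw [if_pos h1, if_pos hjS', if_pos hjS, List.count_cons_self]
            omega
          · have h1 : i ∉ s(ℓ, j) := by
              simp only [Sym2.mem_iff]
              push_neg
              exact ⟨hiℓ, hij⟩
            have h2 : i ∈ S' ↔ i ∈ S := by
              rw [hS'def, Finset.mem_erase]
              exact ⟨fun h => h.2, fun h => ⟨hiℓ, h⟩⟩
            have h3 : (j :: t).count i = t.count i := List.count_cons_of_ne (Ne.symm hij)
            rw [if_neg h1, h3]
            by_cases hiS : i ∈ S
            · rw [if_pos hiS, if_pos (h2.2 hiS)]
              omega
            · rw [if_neg hiS, if_neg (fun h => hiS (h2.1 h))]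
              omega
      refine ⟨hdec ▸ hT, fun i => hdec ▸ hdeg i, ?_⟩
      rw [hdec, hcard]
      show encodeAux (t.length + 1) S (insert s(ℓ, j) T') = j :: t
      have hleaves : (S.filter fun i => degF (insert s(ℓ, j) T') i = 1)
          = S \ (j :: t).toFinset := by
        ext i
        rw [Finset.mem_filter, Finset.mem_sdiff, hdeg i]
        constructor
        · rintro ⟨hiS, hdd⟩
          rw [if_pos hiS] at hdd
          have hc0 : (j :: t).count i = 0 := by omega
          exact ⟨hiS, fun hmem' => (List.count_eq_zero.1 hc0) (List.mem_toFinset.1 hmem')⟩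
        · rintro ⟨hiS, hnot⟩
          rw [if_pos hiS, List.count_eq_zero.2 (fun h => hnot (List.mem_toFinset.2 h))]
          exact ⟨hiS, rfl⟩
      rw [encodeAux, hleaves, dif_pos hR]
      have hdegℓ : degF (insert s(ℓ, j) T') ℓ = 1 := by
        rw [hdeg ℓ, if_pos hℓS, List.count_eq_zero.2 (by simp [hℓj, hℓt])]
      have hex : ∃ j', j' ≠ ℓ ∧ s(ℓ, j') ∈ insert s(ℓ, j) T' :=
        ⟨j, Ne.symm hℓj, Finset.mem_insert_self _ _⟩
      rw [dif_pos hex]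
      have hspec := hex.choose_spec
      have hj₀ : hex.choose = j := by
        have heq : s(ℓ, hex.choose) = s(ℓ, j) :=
          eq_of_degF_one hdegℓ hspec.2 (by simp) (Finset.mem_insert_self _ _) (by simp)
        rcases Sym2.eq_iff.1 heq with ⟨_, h⟩ | ⟨h1, h2⟩
        · exact h
        · exact absurd h1 hℓj
      rw [hj₀, Finset.erase_insert heT']
      have harith : S'.card - 2 = t.length := by omega
      rw [harith] at e3'
      rw [e3']

lemma isT_card_one (h : IsT S T) (hc : S.card = 1) : T = ∅ := by
  cases h with
  | single v => rfl
  | @grow S₀ T₀ ℓ j h₀ hj hl =>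
      have h1 := Finset.card_pos.2 h₀.nonempty
      rw [Finset.card_insert_of_notMem hl] at hc
      omega

lemma isT_card_two (h : IsT S T) (hc : S.card = 2) :
    ∃ a b : V, a ≠ b ∧ S = insert a {b} ∧ T = {s(a, b)} := by
  cases h with
  | single v => simp at hc
  | @grow S₀ T₀ ℓ j h₀ hj hl =>
      rw [Finset.card_insert_of_notMem hl] at hc
      have hc1 : S₀.card = 1 := by omega
      have hT₀ : T₀ = ∅ := isT_card_one h₀ hc1
      obtain ⟨v, hv⟩ := Finset.card_eq_one.1 hc1
      subst hv hT₀
      rw [Finset.mem_singleton] at hj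
      subst hj
      exact ⟨ℓ, j, fun hh => hl (hh ▸ Finset.mem_singleton_self j), rfl, rfl⟩

lemma encode_spec : ∀ (c : ℕ) (S : Finset V) (T : Finset (Sym2 V)), S.card = c → 2 ≤ c →
    IsT S T →
    decode S (encodeAux (c - 2) S T) = T ∧ (encodeAux (c - 2) S T).length + 2 = c ∧
    ∀ a ∈ encodeAux (c - 2) S T, a ∈ S := by
  intro c
  induction c with
  | zero => intro S T _ h2 _; omega
  | succ c ih =>
      intro S T hcS h2c hT
      by_cases hc2 : c + 1 = 2
      · -- base case : |S| = 2
        rw [hc2] at hcS ⊢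
        obtain ⟨a, b, hab, hS, hTe⟩ := isT_card_two hT hcS
        have henc : encodeAux (2 - 2) S T = [] := rfl
        rw [henc]
        refine ⟨?_, by simp, by simp⟩
        have h1 : S.Nonempty := Finset.card_pos.1 (by omega)
        have ha'S := pick_mem S h1
        set a' := pick S h1 with ha'
        have h2 : (S.erase a').Nonempty := by
          rw [← Finset.card_pos, Finset.card_erase_of_mem ha'S]
          omega
        have hb'mem := pick_mem _ h2
        set b' := pick _ h2 with hb'
        rw [decode, dif_pos h1, dif_pos h2, hTe]
        show ({s(a', b')} : Finset (Sym2 V)) = {s(a, b)}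
        have hmem2 : a' ∈ insert a {b} := hS ▸ ha'S
        rcases Finset.mem_insert.1 hmem2 with h' | h'
        · -- a' = a
          have her : S.erase a' = {b} := by
            rw [hS, h', Finset.erase_insert (by simp [hab])]
          rw [her] at hb'mem
          rw [Finset.mem_singleton] at hb'mem
          rw [h', hb'mem]
        · -- a' = b
          rw [Finset.mem_singleton] at h'
          have her : S.erase a' = {a} := by
            rw [hS, h', Finset.erase_insert_of_ne hab, Finset.erase_singleton]
            simp
          rw [her] at hb'mem
          rw [Finset.mem_singleton] at hb'mem
          rw [h', hb'mem, Sym2.eq_swap]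
      · -- inductive step : |S| ≥ 3
        have h3 : 3 ≤ c + 1 := by omega
        have hSc2 : 2 ≤ S.card := by omega
        obtain ⟨ℓ₀, hℓ₀S, hdeg₀⟩ := exists_leaf hT hSc2
        have hfn : (S.filter fun i => degF T i = 1).Nonempty :=
          ⟨ℓ₀, Finset.mem_filter.2 ⟨hℓ₀S, hdeg₀⟩⟩
        have hℓfil := pick_mem _ hfn
        set ℓ := pick _ hfn with hℓdef
        have hℓS : ℓ ∈ S := (Finset.mem_filter.1 hℓfil).1
        have hdegℓ : degF T ℓ = 1 := (Finset.mem_filter.1 hℓfil).2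
        -- there is an edge at ℓ
        obtain ⟨f, hfT⟩ := Finset.card_eq_one.1 hdegℓ
        have hffil : f ∈ T.filter fun e => ℓ ∈ e := by rw [hfT]; simp
        have hfT' : f ∈ T := (Finset.mem_filter.1 hffil).1
        have hℓf : ℓ ∈ f := (Finset.mem_filter.1 hffil).2
        obtain ⟨j₁, hj₁ℓ, hfeq⟩ := exists_other hT hfT' hℓf
        have hex : ∃ j', j' ≠ ℓ ∧ s(ℓ, j') ∈ T := ⟨j₁, hj₁ℓ, hfeq ▸ hfT'⟩
        have hspec := hex.choose_spec
        set j₀ := hex.choose with hj₀def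
        have heT : s(ℓ, j₀) ∈ T := hspec.2
        set S' := S.erase ℓ with hS'def
        set T' := T.erase s(ℓ, j₀) with hT'def
        have hT'tree : IsT S' T' := hT.erase_leaf heT hdegℓ
        have hS'card : S'.card = c := by
          rw [hS'def, Finset.card_erase_of_mem hℓS, hcS]
          omega
        obtain ⟨hdecT', hlen', hmem'⟩ := ih S' T' hS'card (by omega) hT'tree
        set tail := encodeAux (c - 2) S' T' with htaildef
        have harith : c + 1 - 2 = (c - 2) + 1 := by omega
        have henc : encodeAux (c + 1 - 2) S T = j₀ :: tail := by
          rw [harith, encodeAux, dif_pos hfn, dif_pos hex]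
        rw [henc]
        have hj₀S : j₀ ∈ S := hT.mem_of_mem_edge heT j₀ (by simp)
        have htailS : ∀ a ∈ tail, a ∈ S :=
          fun a ha => Finset.mem_of_mem_erase (hmem' a ha)
        refine ⟨?_, by simp; omega, ?_⟩
        · -- decode S (j₀ :: tail) = T
          have hlen'' : tail.length + 2 = S'.card := by omega
          obtain ⟨_, d2'', _⟩ := decode_spec tail S' hlen'' hmem'
          rw [hdecT'] at d2''
          have hins : T = insert s(ℓ, j₀) T' := (Finset.insert_erase heT).symm
          have heT'' : s(ℓ, j₀) ∉ T' := Finset.notMem_erase _ _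
          have hdegT : ∀ i : V, degF T i
              = (if i ∈ s(ℓ, j₀) then 1 else 0) + degF T' i := by
            intro i
            conv_lhs => rw [hins]
            rw [degF_insert heT'']
          have hRleaves : S \ (j₀ :: tail).toFinset = S.filter fun i => degF T i = 1 := by
            ext i
            rw [Finset.mem_sdiff, Finset.mem_filter]
            by_cases hiS : i ∈ S
            · simp only [hiS, true_and]
              by_cases hiℓ : i = ℓ
              · rw [hiℓ]
                have hnotin : ℓ ∉ (j₀ :: tail).toFinset := by
                  rw [List.mem_toFinset]
                  intro hcon
                  rcases List.mem_cons.1 hcon with h' | h'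
                  · exact hspec.1 h'.symm
                  · exact (Finset.mem_erase.1 (hmem' ℓ h')).1 rfl
                simp only [List.mem_toFinset] at hnotin
                simp [hdegℓ]
                exact ⟨fun h => hspec.1 h.symm, fun h => (Finset.mem_erase.1 (hmem' ℓ h)).1 rfl⟩
              · have hiS' : i ∈ S' := Finset.mem_erase.2 ⟨hiℓ, hiS⟩
                rw [hdegT i, d2'' i, if_pos hiS']
                have hie : (if i ∈ s(ℓ, j₀) then 1 else 0)
                    = if i = j₀ then 1 else 0 := by
                  by_cases hij : i = j₀
                  · simp [hij]
                  · have : i ∉ s(ℓ, j₀) := by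
                      simp only [Sym2.mem_iff]; push_neg; exact ⟨hiℓ, hij⟩
                    simp [this, hij]
                rw [hie, List.mem_toFinset, List.mem_cons]
                constructor
                · intro hno
                  push_neg at hno
                  rw [if_neg hno.1, List.count_eq_zero.2 hno.2]
                · intro hh
                  by_cases hij : i = j₀
                  · rw [if_pos hij] at hh; omega
                  · rw [if_neg hij] at hh
                    have : tail.count i = 0 := by omega
                    push_neg
                    exact ⟨hij, List.count_eq_zero.1 this⟩
            · simp [hiS]
          have hR : (S \ (j₀ :: tail).toFinset).Nonempty := by
            rw [hRleaves]; exact hfn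
          rw [decode, dif_pos hR]
          have hpick : pick _ hR = ℓ := pick_congr hRleaves hR hfn
          rw [hpick, hdecT']
          exact (Finset.insert_erase heT)
        · intro a ha
          rcases List.mem_cons.1 ha with h' | h'
          · exact h' ▸ hj₀S
          · exact htailS a h'

open scoped Classical in
/-- The finset of all trees on the vertex set `S`. -/
noncomputable def treesF (S : Finset V) : Finset (Finset (Sym2 V)) :=
  S.sym2.powerset.filter fun T => IsT S T

open scoped Classical in
lemma mem_treesF {S : Finset V} {T : Finset (Sym2 V)} : T ∈ treesF S ↔ IsT S T := by
  rw [treesF, Finset.mem_filter, Finset.mem_powerset]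
  refine ⟨fun h => h.2, fun h => ⟨fun e he => ?_, h⟩⟩
  rw [Finset.mem_sym2_iff]
  exact fun y hy => h.mem_of_mem_edge he y hy

/-- Lists of length `k` with entries in `S`. -/
def listsF (S : Finset V) : ℕ → Finset (List V)
  | 0 => {[]}
  | k + 1 => (S ×ˢ listsF S k).image fun p => p.1 :: p.2

lemma mem_listsF {S : Finset V} {k : ℕ} {s : List V} :
    s ∈ listsF S k ↔ s.length = k ∧ ∀ a ∈ s, a ∈ S := by
  induction k generalizing s with
  | zero =>
      rw [listsF]
      cases s <;> simp
  | succ k ih =>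
      rw [listsF, Finset.mem_image]
      cases s with
      | nil =>
          simp only [List.length_nil]
          constructor
          · rintro ⟨p, _, hp⟩; exact absurd hp (by simp)
          · rintro ⟨h, _⟩; omega
      | cons a t =>
          constructor
          · rintro ⟨p, hp, hpe⟩
            obtain ⟨hp1, hp2⟩ := Finset.mem_product.1 hp
            obtain ⟨rfl, rfl⟩ : p.1 = a ∧ p.2 = t := by
              constructor <;> [exact (List.cons.injEq _ _ _ _ ▸ hpe).1;
                exact (List.cons.injEq _ _ _ _ ▸ hpe).2]
            obtain ⟨hlen, hmem⟩ := ih.1 hp2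
            refine ⟨by simp [hlen], fun b hb => ?_⟩
            rcases List.mem_cons.1 hb with rfl | hb'
            · exact hp1
            · exact hmem b hb'
          · rintro ⟨hlen, hmem⟩
            refine ⟨(a, t), Finset.mem_product.2 ⟨hmem a (by simp), ih.2 ⟨by simpa using hlen,
              fun b hb => hmem b (by simp [hb])⟩⟩, rfl⟩

variable {R : Type*} [CommSemiring R]

lemma sum_listsF_prod (x : V → R) (S : Finset V) (k : ℕ) :
    ∑ s ∈ listsF S k, (s.map x).prod = (∑ i ∈ S, x i) ^ k := by
  induction k with
  | zero => simp [listsF]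
  | succ k ih =>
      rw [listsF, Finset.sum_image (by
        rintro ⟨a, t⟩ _ ⟨b, u⟩ _ h
        simpa using h)]
      rw [Finset.sum_product]
      simp only [List.map_cons, List.prod_cons]
      rw [pow_succ, mul_comm ((∑ i ∈ S, x i) ^ k)]
      rw [← ih, Finset.sum_mul_sum]

lemma prod_pow_count (x : V → R) (S : Finset V) {s : List V} (hs : ∀ a ∈ s, a ∈ S) :
    ∏ i ∈ S, x i ^ s.count i = (s.map x).prod := by
  induction s with
  | nil => simp
  | cons a t ih =>
      have haS : a ∈ S := hs a (by simp)
      have ht : ∀ b ∈ t, b ∈ S := fun b hb => hs b (by simp [hb])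
      simp only [List.map_cons, List.prod_cons]
      rw [← ih ht]
      have hcnt : ∀ i : V, (a :: t).count i = t.count i + (if i = a then 1 else 0) := by
        intro i
        by_cases h : i = a
        · subst h; simp [List.count_cons]
        · simp [List.count_cons, h, show a ≠ i from fun hh => h hh.symm]
      calc ∏ i ∈ S, x i ^ (a :: t).count i
          = ∏ i ∈ S, x i ^ t.count i * x i ^ (if i = a then 1 else 0) := by
            refine Finset.prod_congr rfl fun i _ => ?_
            rw [hcnt i, pow_add]
        _ = (∏ i ∈ S, x i ^ t.count i) * ∏ i ∈ S, x i ^ (if i = a then 1 else 0) :=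
            Finset.prod_mul_distrib
        _ = (∏ i ∈ S, x i ^ t.count i) * x a := by
            congr 1
            have : ∀ i : V, x i ^ (if i = a then 1 else 0) = if i = a then x i else 1 := by
              intro i; split_ifs <;> simp
            rw [Finset.prod_congr rfl fun i _ => this i, Finset.prod_ite_eq' S a x,
              if_pos haS]
        _ = x a * ∏ i ∈ S, x i ^ t.count i := mul_comm _ _

/-- The weighted tree-enumerator identity over any finite vertex set. -/
lemma tree_sum (x : V → R) (S : Finset V) (h2 : 2 ≤ S.card) :
    ∑ T ∈ treesF S, ∏ i ∈ S, x i ^ degF T i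
      = (∏ i ∈ S, x i) * (∑ i ∈ S, x i) ^ (S.card - 2) := by
  rw [← sum_listsF_prod x S (S.card - 2), Finset.mul_sum]
  refine Finset.sum_nbij' (fun T => encodeAux (S.card - 2) S T) (fun s => decode S s)
    ?_ ?_ ?_ ?_ ?_
  · intro T hT
    obtain ⟨_, hlen, hmem⟩ := encode_spec S.card S T rfl h2 (mem_treesF.1 hT)
    refine mem_listsF.2 ⟨?_, hmem⟩
    show (encodeAux (S.card - 2) S T).length = S.card - 2
    omega
  · intro s hs
    obtain ⟨hlen, hmem⟩ := mem_listsF.1 hs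
    obtain ⟨htree, _, _⟩ := decode_spec s S (by omega) hmem
    exact mem_treesF.2 htree
  · intro T hT
    exact (encode_spec S.card S T rfl h2 (mem_treesF.1 hT)).1
  · intro s hs
    obtain ⟨hlen, hmem⟩ := mem_listsF.1 hs
    exact (decode_spec s S (by omega) hmem).2.2
  · intro T hT
    obtain ⟨hdec, hlen, hmem⟩ := encode_spec S.card S T rfl h2 (mem_treesF.1 hT)
    set s := encodeAux (S.card - 2) S T with hsdef
    obtain ⟨_, d2, _⟩ := decode_spec s S (by omega) hmem
    rw [hdec] at d2
    rw [← prod_pow_count x S hmem, ← Finset.prod_mul_distrib]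
    refine Finset.prod_congr rfl fun i hi => ?_
    rw [d2 i, if_pos hi, add_comm, pow_add, pow_one]
    exact mul_comm _ _

open SimpleGraph

lemma isT_reachable (h : IsT S T) :
    ∀ u ∈ S, ∀ v ∈ S, (fromEdgeSet (↑T : Set (Sym2 V))).Reachable u v := by
  induction h with
  | single w =>
      intro u hu v hv
      rw [Finset.mem_singleton] at hu hv
      subst hu; subst hv
      exact Reachable.refl _
  | @grow S T ℓ j h hj hl ih =>
      intro u hu v hv
      have hmono : fromEdgeSet (↑T : Set (Sym2 V)) ≤ fromEdgeSet (↑(insert s(ℓ, j) T)) := by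
        apply fromEdgeSet_mono
        rw [Finset.coe_insert]
        exact Set.subset_insert _ _
      have hadjℓ : (fromEdgeSet (↑(insert s(ℓ, j) T) : Set (Sym2 V))).Adj ℓ j := by
        rw [fromEdgeSet_adj]
        exact ⟨by simp, fun hh => hl (hh ▸ hj)⟩
      have hreach : ∀ w ∈ S, (fromEdgeSet (↑(insert s(ℓ, j) T) : Set (Sym2 V))).Reachable ℓ w :=
        fun w hw => (hadjℓ.reachable).trans ((ih j hj w hw).mono hmono)
      rcases Finset.mem_insert.1 hu with rfl | hu' <;> rcases Finset.mem_insert.1 hv with rfl | hv'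
      · exact Reachable.refl _
      · exact hreach v hv'
      · exact (hreach u hu').symm
      · exact (ih u hu' v hv').mono hmono

lemma isT_acyclic (h : IsT S T) : (fromEdgeSet (↑T : Set (Sym2 V))).IsAcyclic := by
  induction h with
  | single w => simpa using (isAcyclic_bot (V := V))
  | @grow S T ℓ j h hj hl ih =>
      have hℓj : ℓ ≠ j := fun hh => hl (hh ▸ hj)
      have hnbr : ∀ w : V, (fromEdgeSet (↑(insert s(ℓ, j) T) : Set (Sym2 V))).Adj ℓ w → w = j := by
        intro w hw
        rw [fromEdgeSet_adj, Finset.coe_insert, Set.mem_insert_iff] at hw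
        rcases hw.1 with h' | h'
        · rcases Sym2.eq_iff.1 h' with ⟨_, rfl⟩ | ⟨rfl, rfl⟩
          · rfl
          · exact absurd rfl hw.2
        · exact absurd (h.mem_of_mem_edge h' ℓ (by simp)) hl
      intro v c hc
      by_cases hsup : ℓ ∈ c.support
      · -- rotate to start at ℓ
        set c' := c.rotate ℓ hsup with hc'def
        have hcyc' : c'.IsCycle := hc.rotate hsup
        obtain ⟨b, hadj, p, hcons⟩ := SimpleGraph.Walk.not_nil_iff.1 hcyc'.not_nil
        have hbj : b = j := hnbr b hadj
        have hpne : ℓ ≠ b := by rw [hbj]; exact hℓj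
        obtain ⟨w, hadj2, q, hq⟩ := SimpleGraph.Walk.exists_eq_cons_of_ne hpne p.reverse
        have hwj : w = j := hnbr w hadj2
        have hmem : s(ℓ, w) ∈ p.edges := by
          have h1 : s(ℓ, w) ∈ p.reverse.edges := by
            rw [hq, SimpleGraph.Walk.edges_cons]
            exact List.mem_cons_self
          rw [SimpleGraph.Walk.edges_reverse, List.mem_reverse] at h1
          exact h1
        have hnodup := hcyc'.edges_nodup
        rw [hcons, SimpleGraph.Walk.edges_cons] at hnodup
        rw [List.nodup_cons] at hnodup
        rw [hwj] at hmem
        have hedgeq : s(ℓ, b) = s(ℓ, j) := by rw [hbj]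
        rw [hedgeq]  at hnodup
        exact hnodup.1 hmem
      · -- transfer the cycle to the smaller graph
        have hedges : ∀ f ∈ c.edges, f ∈ (fromEdgeSet (↑T : Set (Sym2 V))).edgeSet := by
          intro f hf
          have h1 := c.edges_subset_edgeSet hf
          rw [edgeSet_fromEdgeSet, Set.mem_diff, Finset.coe_insert, Set.mem_insert_iff] at h1
          rcases h1.1 with h' | h'
          · subst h'
            exact absurd (SimpleGraph.Walk.fst_mem_support_of_mem_edges c hf) hsup
          · rw [edgeSet_fromEdgeSet, Set.mem_diff]
            exact ⟨h', h1.2⟩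
        exact ih (c.transfer _ hedges) (hc.transfer hedges)

lemma reachable_of_mem_support {G : SimpleGraph V} {u v w : V} (p : G.Walk u v)
    (hw : w ∈ p.support) : G.Reachable u w := by
  induction p with
  | nil =>
      rw [SimpleGraph.Walk.support_nil, List.mem_singleton] at hw
      subst hw
      exact Reachable.refl _
  | cons hadj q ih =>
      rw [SimpleGraph.Walk.support_cons] at hw
      rcases List.mem_cons.1 hw with rfl | hw'
      · exact Reachable.refl _
      · exact hadj.reachable.trans (ih hw')

lemma walk_supp_sub {F : Finset (Sym2 V)} (hF : ∀ e ∈ F, ∀ x ∈ e, x ∈ S)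
    {G' : SimpleGraph V} (hle : ∀ ⦃x y : V⦄, G'.Adj x y → s(x, y) ∈ F)
    {u v : V} (p : G'.Walk u v) (hu : u ∈ S) : ∀ x ∈ p.support, x ∈ S := by
  induction p with
  | nil =>
      intro x hx
      rw [SimpleGraph.Walk.support_nil, List.mem_singleton] at hx
      exact hx ▸ hu
  | @cons a b c hadj q ih =>
      intro x hx
      rw [SimpleGraph.Walk.support_cons] at hx
      rcases List.mem_cons.1 hx with rfl | hx'
      · exact hu
      · exact ih (hF _ (hle hadj) b (by simp)) x hx'

lemma bypass_lemma {G : SimpleGraph V} {ℓ : V}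
    (hdeg : ∀ w w' : V, G.Adj ℓ w → G.Adj ℓ w' → w = w')
    {u v : V} (hu : u ≠ ℓ) (hv : v ≠ ℓ) (hr : G.Reachable u v) :
    ∃ p : G.Walk u v, ℓ ∉ p.support := by
  obtain ⟨p₀⟩ := hr
  set pp := p₀.toPath with hpp
  by_cases hmem : ℓ ∈ (pp : G.Walk u v).support
  · exfalso
    obtain ⟨q, r, hqr⟩ := SimpleGraph.Walk.mem_support_iff_exists_append.1 hmem
    obtain ⟨w₁, hadj1, r₁, hr₁⟩ :=
      SimpleGraph.Walk.exists_eq_cons_of_ne (Ne.symm hv) r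
    obtain ⟨w₂, hadj2, q₂, hq₂⟩ :=
      SimpleGraph.Walk.exists_eq_cons_of_ne (Ne.symm hu) q.reverse
    have hw12 : w₁ = w₂ := hdeg _ _ hadj1 hadj2
    have hnd : ((pp : G.Walk u v).support).Nodup := pp.property.support_nodup
    rw [hqr, SimpleGraph.Walk.support_append] at hnd
    have hdisj := List.disjoint_of_nodup_append hnd
    have hw₂q : w₂ ∈ q.support := by
      have h1 : w₂ ∈ q.reverse.support := by
        rw [hq₂, SimpleGraph.Walk.support_cons]
        exact List.mem_cons_of_mem _ (SimpleGraph.Walk.start_mem_support _)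
      rw [SimpleGraph.Walk.support_reverse, List.mem_reverse] at h1
      exact h1
    have hw₁r : w₁ ∈ r.support.tail := by
      rw [hr₁, SimpleGraph.Walk.support_cons, List.tail_cons]
      exact SimpleGraph.Walk.start_mem_support _
    exact hdisj (hw12 ▸ hw₂q) hw₁r
  · exact ⟨pp, hmem⟩

lemma acyclic_mono {G G' : SimpleGraph V} (hle : G ≤ G') (h : G'.IsAcyclic) : G.IsAcyclic :=
  fun _ c hc => h (c.mapLe hle) (hc.mapLe hle)

lemma sym2_other {e : Sym2 V} (hd : ¬e.IsDiag) {x : V} (hx : x ∈ e) :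
    ∃ y, y ≠ x ∧ e = s(x, y) := by
  induction e with
  | _ a b =>
    rw [Sym2.mk_isDiag_iff] at hd
    rcases Sym2.mem_iff.1 hx with rfl | rfl
    · exact ⟨b, fun hh => hd hh.symm, rfl⟩
    · exact ⟨a, hd, Sym2.eq_swap⟩

/-- Hypotheses on `(S, F)` saying that `F` is (the edge set of) a tree on `S`. -/
def Good (S : Finset V) (F : Finset (Sym2 V)) : Prop :=
  (∀ e ∈ F, ¬e.IsDiag ∧ ∀ x ∈ e, x ∈ S) ∧
  (∀ u ∈ S, ∀ v ∈ S, (fromEdgeSet (↑F : Set (Sym2 V))).Reachable u v) ∧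
  (fromEdgeSet (↑F : Set (Sym2 V))).IsAcyclic

lemma good_leaf : ∀ (c : ℕ) (S : Finset V) (F : Finset (Sym2 V)), S.card = c → Good S F →
    2 ≤ S.card → ∀ a ∈ S, ∃ ℓ ∈ S, ℓ ≠ a ∧ ∃ e ∈ F, ℓ ∈ e ∧ ∀ e' ∈ F, ℓ ∈ e' → e' = e := by
  intro c
  induction c using Nat.strong_induction_on with
  | _ c ih =>
    intro S F hSc hGood h2 a ha
    classical
    obtain ⟨hE, hConn, hAcy⟩ := hGood
    set G := fromEdgeSet (↑F : Set (Sym2 V)) with hG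
    -- find an edge at `a`
    have hbne : (S.erase a).Nonempty := by
      rw [← Finset.card_pos, Finset.card_erase_of_mem ha]
      omega
    obtain ⟨b₀, hb₀⟩ := hbne
    have hb₀S : b₀ ∈ S := Finset.mem_of_mem_erase hb₀
    have hab₀ : a ≠ b₀ := fun hh => (Finset.mem_erase.1 hb₀).1 hh.symm
    obtain ⟨p₀⟩ := hConn a ha b₀ hb₀S
    obtain ⟨b, hadj, ptail, _⟩ := SimpleGraph.Walk.exists_eq_cons_of_ne hab₀ p₀
    have heF : s(a, b) ∈ F := by
      have := ((fromEdgeSet_adj _).1 hadj).1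
      rwa [Finset.mem_coe] at this
    have hab : a ≠ b := hadj.ne
    have hbS : b ∈ S := (hE _ heF).2 b (by simp)
    -- the edge is a bridge
    have hbr := (isAcyclic_iff_forall_adj_isBridge.1 hAcy) hadj
    rw [isBridge_iff] at hbr
    set Gm := G \ fromEdgeSet {s(a, b)} with hGm
    have hGmle : Gm ≤ G := sdiff_le
    have hGmadj : ∀ {x y : V}, Gm.Adj x y ↔ G.Adj x y ∧ s(x, y) ≠ s(a, b) := by
      intro x y
      rw [hGm, sdiff_adj]
      constructor
      · rintro ⟨h1, h2⟩
        exact ⟨h1, fun hh => h2 ((fromEdgeSet_adj _).2 ⟨by simp [hh], h1.ne⟩)⟩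
      · rintro ⟨h1, h2⟩
        refine ⟨h1, fun hh => h2 ?_⟩
        have := ((fromEdgeSet_adj _).1 hh).1
        simpa using this
    set Sb := S.filter (fun v => Gm.Reachable b v) with hSbdef
    have hbSb : b ∈ Sb := Finset.mem_filter.2 ⟨hbS, Reachable.refl b⟩
    have haSb : a ∉ Sb := fun h => hbr ((Finset.mem_filter.1 h).2.symm)
    have hba : b ≠ a := fun hh => haSb (hh ▸ hbSb)
    -- edges other than s(a,b) with an endpoint in Sb stay in Sb
    have hstep : ∀ x y : V, s(x, y) ∈ F → s(x, y) ≠ s(a, b) → x ∈ Sb → y ∈ Sb := by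
      intro x y hxy hne hxSb
      by_cases hxyeq : x = y
      · exact hxyeq ▸ hxSb
      · have hGadj : G.Adj x y := (fromEdgeSet_adj _).2 ⟨by rwa [Finset.mem_coe], hxyeq⟩
        have hGmadj' : Gm.Adj x y := hGmadj.2 ⟨hGadj, hne⟩
        have hyS : y ∈ S := (hE _ hxy).2 y (by simp)
        exact Finset.mem_filter.2
          ⟨hyS, ((Finset.mem_filter.1 hxSb).2).trans hGmadj'.reachable⟩
    by_cases hSbb : Sb = {b}
    · -- b is a leaf
      refine ⟨b, hbS, hba, s(a, b), heF, by simp, ?_⟩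
      intro e' he' hbe'
      by_contra hne
      obtain ⟨z, hzb, hze⟩ := sym2_other (hE _ he').1 hbe'
      have hz : z ∈ Sb := hstep b z (hze ▸ he') (fun hh => hne (hze ▸ hh)) hbSb
      rw [hSbb, Finset.mem_singleton] at hz
      exact hzb hz
    · -- recurse into the component of b
      have hSbS : Sb ⊆ S := Finset.filter_subset _ _
      have hb2 : 2 ≤ Sb.card := by
        rcases Nat.lt_or_ge Sb.card 2 with h1 | h1
        · exfalso
          have hpos : 1 ≤ Sb.card := Finset.card_pos.2 ⟨b, hbSb⟩
          have : Sb.card = 1 := by omega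
          obtain ⟨w, hw⟩ := Finset.card_eq_one.1 this
          rw [hw] at hbSb
          rw [Finset.mem_singleton] at hbSb
          exact hSbb (by rw [hw, hbSb])
        · exact h1
      set Fb := (F.erase s(a, b)).filter (fun e => ∀ x ∈ e, x ∈ Sb) with hFbdef
      have hFbF : ∀ e ∈ Fb, e ∈ F :=
        fun e he => Finset.mem_of_mem_erase (Finset.mem_filter.1 he).1
      -- edges of walks in Gm starting in Sb lie in Fb
      have hGoodb : Good Sb Fb := by
        refine ⟨fun e he => ⟨(hE _ (hFbF e he)).1, (Finset.mem_filter.1 he).2⟩, ?_, ?_⟩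
        · intro u hu v hv
          have hru : Gm.Reachable b u := (Finset.mem_filter.1 hu).2
          have hrv : Gm.Reachable b v := (Finset.mem_filter.1 hv).2
          obtain ⟨w⟩ := hru.symm.trans hrv
          have hsupS : ∀ x ∈ w.support, x ∈ S := by
            refine walk_supp_sub (fun e he => (hE e he).2) ?_ w (hSbS hu)
            intro x y hxy
            have := ((fromEdgeSet_adj _).1 (hGmle hxy)).1
            rwa [Finset.mem_coe] at this
          have hsupSb : ∀ x ∈ w.support, x ∈ Sb := by
            intro x hx
            exact Finset.mem_filter.2 ⟨hsupS x hx,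
              ((Finset.mem_filter.1 hu).2).trans (reachable_of_mem_support w hx)⟩
          have hedges : ∀ f ∈ w.edges, f ∈ (fromEdgeSet (↑Fb : Set (Sym2 V))).edgeSet := by
            intro f hf
            have hfGm : f ∈ Gm.edgeSet := w.edges_subset_edgeSet hf
            rw [hGm, edgeSet_sdiff] at hfGm
            have hfG : f ∈ G.edgeSet := hfGm.1
            rw [hG, edgeSet_fromEdgeSet, Set.mem_diff] at hfG
            have hfF : f ∈ F := Finset.mem_coe.1 hfG.1
            have hfnd : ¬f.IsDiag := hfG.2
            have hfne : f ≠ s(a, b) := by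
              intro hh
              apply hfGm.2
              rw [edgeSet_fromEdgeSet, Set.mem_diff]
              exact ⟨by simp [hh], hfnd⟩
            have hfsup : ∀ x ∈ f, x ∈ w.support := by
              intro x hx
              induction f with
              | _ x' y' =>
                rcases Sym2.mem_iff.1 hx with rfl | rfl
                · exact SimpleGraph.Walk.fst_mem_support_of_mem_edges w hf
                · exact SimpleGraph.Walk.snd_mem_support_of_mem_edges w hf
            have hfFb : f ∈ Fb := Finset.mem_filter.2 ⟨Finset.mem_erase.2 ⟨hfne, hfF⟩,
              fun x hx => hsupSb x (hfsup x hx)⟩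
            rw [edgeSet_fromEdgeSet, Set.mem_diff]
            exact ⟨by rwa [Finset.mem_coe], hfnd⟩
          exact ⟨w.transfer _ hedges⟩
        · refine acyclic_mono ?_ hAcy
          apply fromEdgeSet_mono
          intro e he
          rw [Finset.mem_coe] at he ⊢
          exact hFbF e he
      have hcardlt : Sb.card < c := by
        have hsub : Sb ⊆ S.erase a :=
          fun x hx => Finset.mem_erase.2 ⟨fun hh => haSb (hh ▸ hx), hSbS hx⟩
        have := Finset.card_le_card hsub
        rw [Finset.card_erase_of_mem ha] at this
        omega
      obtain ⟨ℓ, hℓSb, hℓb, e₁, he₁Fb, hℓe₁, huniq⟩ :=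
        ih Sb.card hcardlt Sb Fb rfl hGoodb hb2 b hbSb
      refine ⟨ℓ, hSbS hℓSb, fun hh => haSb (hh ▸ hℓSb), e₁, hFbF _ he₁Fb, hℓe₁, ?_⟩
      intro e' he' hℓe'
      have hℓa : ℓ ≠ a := fun hh => haSb (hh ▸ hℓSb)
      have he'ne : e' ≠ s(a, b) := by
        intro hh
        rw [hh] at hℓe'
        rcases Sym2.mem_iff.1 hℓe' with rfl | rfl
        · exact hℓa rfl
        · exact hℓb rfl
      obtain ⟨z, hzℓ, hze⟩ := sym2_other (hE _ he').1 hℓe'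
      have hzSb : z ∈ Sb := hstep ℓ z (hze ▸ he') (fun hh => he'ne (hze ▸ hh)) hℓSb
      have he'Fb : e' ∈ Fb := by
        refine Finset.mem_filter.2 ⟨Finset.mem_erase.2 ⟨he'ne, he'⟩, ?_⟩
        intro x hx
        rw [hze] at hx
        rcases Sym2.mem_iff.1 hx with rfl | rfl
        · exact hℓSb
        · exact hzSb
      exact huniq e' he'Fb hℓe'

lemma good_isT : ∀ (c : ℕ) (S : Finset V) (F : Finset (Sym2 V)), S.card = c → Good S F →
    S.Nonempty → IsT S F := by
  intro c
  induction c using Nat.strong_induction_on with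
  | _ c ih =>
    intro S F hSc hGood hne
    classical
    obtain ⟨hE, hConn, hAcy⟩ := hGood
    rcases Nat.lt_or_ge S.card 2 with h1 | h2
    · -- |S| = 1
      have hc1 : S.card = 1 := by have := Finset.card_pos.2 hne; omega
      obtain ⟨v, hv⟩ := Finset.card_eq_one.1 hc1
      have hF : F = ∅ := by
        rw [Finset.eq_empty_iff_forall_notMem]
        intro e he
        obtain ⟨hd, hmem⟩ := hE e he
        induction e with
        | _ x y =>
          have hx := hmem x (by simp)
          have hy := hmem y (by simp)
          rw [hv, Finset.mem_singleton] at hx hy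
          exact hd (by rw [Sym2.mk_isDiag_iff, hx, hy])
      rw [hF, hv]
      exact IsT.single v
    · obtain ⟨a, haS⟩ := hne
      obtain ⟨ℓ, hℓS, hℓa, e, heF, hℓe, huniq⟩ :=
        good_leaf c S F hSc ⟨hE, hConn, hAcy⟩ h2 a haS
      obtain ⟨j, hjℓ, hje⟩ := sym2_other (hE _ heF).1 hℓe
      have hjS : j ∈ S := (hE _ heF).2 j (by rw [hje]; exact Sym2.mem_mk_right ℓ j)
      set S' := S.erase ℓ with hS'def
      set F' := F.erase e with hF'def
      have hadjj : ∀ w : V, (fromEdgeSet (↑F : Set (Sym2 V))).Adj ℓ w → w = j := by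
        intro w hw
        have h1 : s(ℓ, w) ∈ F := Finset.mem_coe.1 ((fromEdgeSet_adj _).1 hw).1
        have h2' := huniq _ h1 (by simp)
        rw [hje] at h2'
        rcases Sym2.eq_iff.1 h2' with ⟨_, hh⟩ | ⟨hh1, hh2⟩
        · exact hh
        · exact absurd hh1.symm hjℓ
      have hEnotℓ : ∀ e' ∈ F', ∀ x ∈ e', x ∈ S' := by
        intro e' he' x hx
        have he'F : e' ∈ F := Finset.mem_of_mem_erase he'
        refine Finset.mem_erase.2 ⟨?_, (hE _ he'F).2 x hx⟩
        intro hxℓ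
        exact (Finset.mem_erase.1 he').1 (huniq e' he'F (hxℓ ▸ hx))
      have hGood' : Good S' F' := by
        refine ⟨fun e' he' => ⟨(hE _ (Finset.mem_of_mem_erase he')).1, hEnotℓ e' he'⟩, ?_, ?_⟩
        · intro u hu v hv
          have huS : u ∈ S := Finset.mem_of_mem_erase hu
          have hvS : v ∈ S := Finset.mem_of_mem_erase hv
          have hr := hConn u huS v hvS
          obtain ⟨p, hp⟩ := bypass_lemma
            (fun w w' hw hw' => (hadjj w hw).trans (hadjj w' hw').symm)
            (Finset.mem_erase.1 hu).1 (Finset.mem_erase.1 hv).1 hr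
          have hedges : ∀ f ∈ p.edges, f ∈ (fromEdgeSet (↑F' : Set (Sym2 V))).edgeSet := by
            intro f hf
            have hfG := p.edges_subset_edgeSet hf
            rw [edgeSet_fromEdgeSet, Set.mem_diff] at hfG
            have hfF : f ∈ F := Finset.mem_coe.1 hfG.1
            have hfsup : ∀ x ∈ f, x ∈ p.support := by
              intro x hx
              induction f with
              | _ x' y' =>
                rcases Sym2.mem_iff.1 hx with rfl | rfl
                · exact SimpleGraph.Walk.fst_mem_support_of_mem_edges p hf
                · exact SimpleGraph.Walk.snd_mem_support_of_mem_edges p hf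
            have hfne : f ≠ e := by
              intro hh
              exact hp (hfsup ℓ (hh ▸ hℓe))
            rw [edgeSet_fromEdgeSet, Set.mem_diff]
            exact ⟨Finset.mem_coe.2 (Finset.mem_erase.2 ⟨hfne, hfF⟩), hfG.2⟩
          exact ⟨p.transfer _ hedges⟩
        · refine acyclic_mono ?_ hAcy
          apply fromEdgeSet_mono
          intro f hf
          rw [Finset.mem_coe] at hf ⊢
          exact Finset.mem_of_mem_erase hf
      have hS'ne : S'.Nonempty := ⟨j, Finset.mem_erase.2 ⟨hjℓ, hjS⟩⟩
      have hc' : S'.card < c := by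
        rw [hS'def, Finset.card_erase_of_mem hℓS]
        omega
      have hT' : IsT S' F' := ih S'.card hc' S' F' rfl hGood' hS'ne
      have := IsT.grow ℓ j hT' (Finset.mem_erase.2 ⟨hjℓ, hjS⟩) (Finset.notMem_erase ℓ S)
      rw [Finset.insert_erase hℓS, ← hje, Finset.insert_erase heF] at this
      exact this

lemma degIn_coe (F : Finset (Sym2 V)) (i : V) : degIn (↑F : Set (Sym2 V)) i = degF F i := by
  have h : {e ∈ (↑F : Set (Sym2 V)) | i ∈ e} = ↑(F.filter fun e => i ∈ e) := by
    ext e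
    simp [Set.mem_setOf_eq]
  rw [degIn, h, Set.ncard_coe_finset]
  rfl

lemma spanning_iff [Fintype V] [Nonempty V] (F : Finset (Sym2 V)) :
    IsSpanningTree (⊤ : SimpleGraph V) (↑F : Set (Sym2 V)) ↔ IsT Finset.univ F := by
  constructor
  · rintro ⟨hsub, hconn, hacy⟩
    refine good_isT Finset.univ.card Finset.univ F rfl ⟨?_, ?_, ?_⟩ Finset.univ_nonempty
    · intro e he
      have := hsub (Finset.mem_coe.2 he)
      rw [edgeSet_top, Set.mem_compl_iff, Sym2.mem_diagSet] at this
      exact ⟨this, fun x _ => Finset.mem_univ x⟩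
    · exact fun u _ v _ => hconn.preconnected u v
    · exact hacy
  · intro h
    refine ⟨?_, ?_, isT_acyclic h⟩
    · intro e he
      rw [edgeSet_top, Set.mem_compl_iff, Sym2.mem_diagSet]
      exact h.not_isDiag (Finset.mem_coe.1 he)
    · rw [connected_iff]
      exact ⟨fun u v => isT_reachable h u (Finset.mem_univ u) v (Finset.mem_univ v),
        inferInstance⟩

end CayleyPrufer

open CayleyPrufer in
/-- **The Cayley–Prüfer formula**: in `ℤ[x_1,…,x_n]`, the generating function of spanning
trees of the complete graph `K_n` by vertex degrees is
`x_1 ⋯ x_n (x_1 + ⋯ + x_n)^(n-2)`. -/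
theorem cayley_prufer (n : ℕ) (hn : 2 ≤ n) :
    (∑ᶠ T ∈ {T : Set (Sym2 (Fin n)) | IsSpanningTree (⊤ : SimpleGraph (Fin n)) T},
        ∏ i : Fin n, (X i : MvPolynomial (Fin n) ℤ) ^ degIn T i) =
      (∏ i : Fin n, (X i : MvPolynomial (Fin n) ℤ)) * (∑ i : Fin n, X i) ^ (n - 2) := by
  classical
  haveI : Nonempty (Fin n) := ⟨⟨0, by omega⟩⟩
  have hfin : {T : Set (Sym2 (Fin n)) | IsSpanningTree (⊤ : SimpleGraph (Fin n)) T}.Finite :=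
    Set.toFinite _
  rw [finsum_mem_eq_finite_toFinset_sum _ hfin]
  have hcard : (Finset.univ : Finset (Fin n)).card = n := by
    rw [Finset.card_univ, Fintype.card_fin]
  have hmain := tree_sum (R := MvPolynomial (Fin n) ℤ) (fun i => X i) (Finset.univ : Finset (Fin n))
    (by rw [hcard]; exact hn)
  rw [hcard] at hmain
  rw [← hmain]
  refine Finset.sum_nbij' (fun A => A.toFinite.toFinset) (fun F => (↑F : Set (Sym2 (Fin n))))
    ?_ ?_ ?_ ?_ ?_
  · intro A hA
    rw [Set.Finite.mem_toFinset, Set.mem_setOf_eq] at hA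
    rw [mem_treesF, ← spanning_iff]
    rwa [Set.Finite.coe_toFinset]
  · intro F hF
    rw [Set.Finite.mem_toFinset, Set.mem_setOf_eq]
    exact (spanning_iff F).2 (mem_treesF.1 hF)
  · intro A hA
    exact Set.Finite.coe_toFinset _
  · intro F hF
    ext e
    simp [Set.Finite.mem_toFinset]
    exact Iff.rfl
  · intro A hA
    refine Finset.prod_congr rfl fun i _ => ?_
    congr 1
    rw [← degIn_coe A.toFinite.toFinset i, Set.Finite.coe_toFinset]
end

section
/- Let G be a connected finite simple graph with vertex set V and edge set E, orient each edge from its smaller endpoint to its larger endpoint (with respect to a fixed linear order on V), and let ∂ : ℤ^E → ℤ^V be the resulting signed incidence matrix. Let C = im_ℤ(∂ᵀ) ⊆ ℤ^E be the cut lattice and F = ker_ℤ(∂) ⊆ ℤ^E the flow lattice, and let K(G) be the critical group, i.e., the torsion subgroup of ℤ^V / im_ℤ(L(G)). Then C ∩ F = 0, and the quotient group ℤ^E / (C + F) is isomorphic as an abelian group to K(G). -/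
open Matrix

/-- The larger endpoint of an (unordered) edge. -/
def sym2Max {V : Type*} [LinearOrder V] (e : Sym2 V) : V :=
  Sym2.lift ⟨fun a b => a ⊔ b, fun a b => sup_comm a b⟩ e

/-- The smaller endpoint of an (unordered) edge. -/
def sym2Min {V : Type*} [LinearOrder V] (e : Sym2 V) : V :=
  Sym2.lift ⟨fun a b => a ⊓ b, fun a b => inf_comm a b⟩ e

/-- The signed incidence matrix of `G`, each edge oriented from its smaller endpoint to
its larger endpoint: the entry at `(w, e)` is `1` if `w` is the head (larger endpoint) of
`e`, `-1` if `w` is the tail (smaller endpoint), and `0` otherwise. -/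
def signedInc {V : Type*} [Fintype V] [LinearOrder V] (G : SimpleGraph V) :
    Matrix V G.edgeSet ℤ :=
  fun w e => (if w = sym2Max (e : Sym2 V) then 1 else 0) -
    (if w = sym2Min (e : Sym2 V) then 1 else 0)

set_option maxHeartbeats 1000000
set_option linter.unusedSectionVars false

section Aux

variable {V : Type*} [Fintype V] [LinearOrder V]

lemma sym2Max_mk (a b : V) : sym2Max s(a,b) = a ⊔ b := rfl
lemma sym2Min_mk (a b : V) : sym2Min s(a,b) = a ⊓ b := rfl

lemma edge_repr (e : Sym2 V) (he : ¬ e.IsDiag) :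
    sym2Min e < sym2Max e ∧ e = s(sym2Min e, sym2Max e) := by
  induction e with
  | _ a b =>
    rw [Sym2.mk_isDiag_iff] at he
    rcases le_total a b with h | h
    · constructor
      · simpa [sym2Min_mk, sym2Max_mk, inf_eq_left.2 h, sup_eq_right.2 h] using
          lt_of_le_of_ne h he
      · simp [sym2Min_mk, sym2Max_mk, inf_eq_left.2 h, sup_eq_right.2 h]
    · constructor
      · simpa [sym2Min_mk, sym2Max_mk, inf_eq_right.2 h, sup_eq_left.2 h] using
          lt_of_le_of_ne h (Ne.symm he)
      · rw [sym2Min_mk, sym2Max_mk, inf_eq_right.2 h, sup_eq_left.2 h, Sym2.eq_swap]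

variable (G : SimpleGraph V) [DecidableRel G.Adj]

set_option linter.unusedSectionVars false

lemma signedInc_mul_transpose : signedInc G * (signedInc G)ᵀ = SimpleGraph.lapMatrix ℤ G := by
  classical
  ext u w
  rw [Matrix.mul_apply]
  by_cases huw : u = w
  · subst huw
    have hterm : ∀ e : G.edgeSet, signedInc G u e * (signedInc G)ᵀ e u =
        if u ∈ (e : Sym2 V) then 1 else 0 := by
      rintro ⟨e, he⟩
      obtain ⟨hlt, hrepr⟩ := edge_repr e (G.not_isDiag_of_mem_edgeSet he)
      have hne : sym2Min e ≠ sym2Max e := hlt.ne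
      have hmem : u ∈ e ↔ u = sym2Min e ∨ u = sym2Max e := by
        conv_lhs => rw [hrepr]
        simp only [Sym2.mem_iff]
      rw [transpose_apply]
      simp only [signedInc]
      by_cases h1 : u = sym2Min e
      · rw [if_neg (h1 ▸ hne), if_pos h1, if_pos (hmem.2 (Or.inl h1))]; ring
      · by_cases h2 : u = sym2Max e
        · rw [if_pos h2, if_neg h1, if_pos (hmem.2 (Or.inr h2))]; ring
        · rw [if_neg h2, if_neg h1, if_neg (fun hm => ((hmem.1 hm).elim h1 h2))]; ring
    rw [Fintype.sum_congr _ _ hterm,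
      Finset.sum_set_coe (f := fun e => if u ∈ e then (1:ℤ) else 0), Finset.sum_boole]
    have : {e ∈ G.edgeSet.toFinset | u ∈ e} = G.incidenceFinset u := by
      rw [SimpleGraph.incidenceFinset_eq_filter]
      ext e; simp
    rw [this, SimpleGraph.card_incidenceFinset_eq_degree]
    simp [SimpleGraph.lapMatrix, SimpleGraph.degMatrix]
  · have hterm : ∀ e : G.edgeSet, signedInc G u e * (signedInc G)ᵀ e w =
        -(if (e : Sym2 V) = s(u, w) then 1 else 0) := by
      rintro ⟨e, he⟩
      obtain ⟨hlt, hrepr⟩ := edge_repr e (G.not_isDiag_of_mem_edgeSet he)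
      have hne : sym2Min e ≠ sym2Max e := hlt.ne
      have heq : e = s(u, w) ↔
          (u = sym2Min e ∧ w = sym2Max e) ∨ (u = sym2Max e ∧ w = sym2Min e) := by
        conv_lhs => rw [hrepr]
        rw [Sym2.eq_iff]
        tauto
      rw [transpose_apply]
      simp only [signedInc]
      simp only [heq]
      by_cases h1 : u = sym2Min e
      · by_cases h2 : u = sym2Max e
        · exact absurd (h1.symm.trans h2) hne
        · by_cases h3 : w = sym2Min e
          · exact absurd (h1.trans h3.symm) huw
          · by_cases h4 : w = sym2Max e
            · rw [if_neg h2, if_pos h1, if_pos h4, if_neg h3,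
                if_pos (Or.inl ⟨h1, h4⟩)]; ring
            · rw [if_neg h2, if_pos h1, if_neg h4, if_neg h3,
                if_neg (by rintro (⟨-, hw⟩ | ⟨hu, -⟩) <;> [exact h4 hw; exact h2 hu])]; ring
      · by_cases h2 : u = sym2Max e
        · by_cases h3 : w = sym2Min e
          · by_cases h4 : w = sym2Max e
            · exact absurd (h3.symm.trans h4) hne
            · rw [if_pos h2, if_neg h1, if_neg h4, if_pos h3,
                if_pos (Or.inr ⟨h2, h3⟩)]; ring
          · by_cases h4 : w = sym2Max e
            · exact absurd (h2.trans h4.symm) huw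
            · rw [if_pos h2, if_neg h1, if_neg h4, if_neg h3,
                if_neg (by rintro (⟨hu, -⟩ | ⟨-, hw⟩) <;> [exact h1 hu; exact h3 hw])]; ring
        · simp [h1, h2]
    rw [Fintype.sum_congr _ _ hterm,
      Finset.sum_set_coe (f := fun e => -(if e = s(u, w) then (1:ℤ) else 0)),
      Finset.sum_neg_distrib, Finset.sum_ite_eq']
    simp only [Set.mem_toFinset, SimpleGraph.mem_edgeSet, SimpleGraph.lapMatrix,
      SimpleGraph.degMatrix, Matrix.sub_apply, Matrix.diagonal_apply_ne _ huw,
      SimpleGraph.adjMatrix_apply, zero_sub]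

/-- The linear functional summing the coordinates. -/
def sumL (R : Type*) [CommRing R] : (V → R) →ₗ[R] R where
  toFun x := ∑ v, x v
  map_add' x y := by simp [Finset.sum_add_distrib]
  map_smul' c x := by simp [Finset.mul_sum]

lemma sum_signedInc (e : G.edgeSet) : ∑ v, signedInc G v e = 0 := by
  obtain ⟨hlt, -⟩ := edge_repr (e : Sym2 V) (G.not_isDiag_of_mem_edgeSet e.2)
  simp [signedInc, Finset.sum_sub_distrib]

lemma sum_mulVec_signedInc (x : G.edgeSet → ℤ) : ∑ v, (signedInc G *ᵥ x) v = 0 := by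
  simp only [mulVec, dotProduct]
  rw [Finset.sum_comm]
  refine Finset.sum_eq_zero fun e _ => ?_
  rw [← Finset.sum_mul, sum_signedInc, zero_mul]

lemma single_sub_single_mem (u v : V) (h : G.Adj u v) :
    (Pi.single v 1 - Pi.single u 1 : V → ℤ) ∈ LinearMap.range (signedInc G).mulVecLin := by
  rcases lt_or_gt_of_ne h.ne with hlt | hlt
  · refine ⟨Pi.single (⟨s(u,v), h⟩ : G.edgeSet) 1, ?_⟩
    rw [mulVecLin_apply, mulVec_single]
    have hmax : sym2Max (s(u,v) : Sym2 V) = v := by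
      rw [sym2Max_mk]; exact sup_eq_right.2 hlt.le
    have hmin : sym2Min (s(u,v) : Sym2 V) = u := by
      rw [sym2Min_mk]; exact inf_eq_left.2 hlt.le
    ext w
    simp [signedInc, hmax, hmin, Pi.single_apply]
  · have hmem := (LinearMap.range (signedInc G).mulVecLin).neg_mem
      (show (Pi.single u 1 - Pi.single v 1 : V → ℤ) ∈ _ from ?_)
    · simpa using hmem
    · refine ⟨Pi.single (⟨s(v,u), h.symm⟩ : G.edgeSet) 1, ?_⟩
      rw [mulVecLin_apply, mulVec_single]
      have hmax : sym2Max (s(v,u) : Sym2 V) = u := by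
        rw [sym2Max_mk]; exact sup_eq_right.2 hlt.le
      have hmin : sym2Min (s(v,u) : Sym2 V) = v := by
        rw [sym2Min_mk]; exact inf_eq_left.2 hlt.le
      ext w
      simp [signedInc, hmax, hmin, Pi.single_apply]

lemma single_sub_single_mem' (hG : G.Connected) (u v : V) :
    (Pi.single v 1 - Pi.single u 1 : V → ℤ) ∈ LinearMap.range (signedInc G).mulVecLin := by
  obtain ⟨p⟩ := hG u v
  induction p with
  | nil => simp
  | @cons a b c h p ih =>
    have := add_mem ih (single_sub_single_mem G a b h)
    convert this using 1
    abel

lemma range_signedInc (hG : G.Connected) :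
    LinearMap.range (signedInc G).mulVecLin = LinearMap.ker (sumL ℤ) := by
  apply le_antisymm
  · rintro _ ⟨x, rfl⟩
    simpa [sumL, LinearMap.mem_ker] using sum_mulVec_signedInc G x
  · intro x hx
    have hx' : ∑ v, x v = 0 := hx
    obtain ⟨v0⟩ := hG.nonempty
    have hxe : x = ∑ v, x v • (Pi.single v 1 - Pi.single v0 1 : V → ℤ) := by
      ext w
      simp only [Finset.sum_apply, Pi.smul_apply, Pi.sub_apply, Pi.single_apply,
        smul_eq_mul, mul_sub, Finset.sum_sub_distrib]
      rw [← Finset.sum_mul, hx', zero_mul, sub_zero]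
      simp [mul_ite, Finset.sum_ite_eq]
    rw [hxe]
    exact Submodule.sum_mem _ fun v _ =>
      Submodule.smul_mem _ _ (single_sub_single_mem' G hG v0 v)

lemma rat_den_mul (q : ℚ) : (q.den : ℚ) * q = q.num := by
  have h : (q.den : ℚ) ≠ 0 := by exact_mod_cast q.den_ne_zero
  have h2 : (q.num : ℚ) = q * q.den := (div_eq_iff h).1 (Rat.num_div_den q)
  rw [mul_comm, ← h2]

lemma ker_lapMatrix_rat (hG : G.Connected) :
    LinearMap.ker (SimpleGraph.lapMatrix ℚ G).mulVecLin =
      Submodule.span ℚ {(fun _ => 1 : V → ℚ)} := by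
  ext y
  constructor
  · intro hy
    have h0 : SimpleGraph.lapMatrix ℚ G *ᵥ y = 0 := hy
    have hadj : ∀ i j, G.Adj i j → y i = y j := by
      refine (SimpleGraph.lapMatrix_toLinearMap₂'_apply'_eq_zero_iff_forall_adj ℚ G y).1 ?_
      rw [Matrix.toLinearMap₂'_apply', h0, dotProduct_zero]
    have hreach : ∀ i j, G.Reachable i j → y i = y j := by
      intro i j ⟨w⟩
      induction w with
      | nil => rfl
      | cons hA _ h' => exact (hadj _ _ hA).trans h'
    obtain ⟨v0⟩ := hG.nonempty
    rw [Submodule.mem_span_singleton]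
    exact ⟨y v0, by ext v; simpa using (hreach v v0 (hG v v0)).symm⟩
  · intro hy
    rw [Submodule.mem_span_singleton] at hy
    obtain ⟨a, rfl⟩ := hy
    rw [LinearMap.mem_ker, _root_.map_smul]
    rw [Matrix.mulVecLin_apply]
    rw [show (SimpleGraph.lapMatrix ℚ G *ᵥ fun _ => 1) = 0 from
      SimpleGraph.lapMatrix_mulVec_const_eq_zero G]
    simp

lemma range_lapMatrix_rat (hG : G.Connected) :
    LinearMap.range (SimpleGraph.lapMatrix ℚ G).mulVecLin = LinearMap.ker (sumL ℚ) := by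
  have hVne : Nonempty V := hG.nonempty
  obtain ⟨v0⟩ := hVne
  -- range ≤ ker sum
  have hle : LinearMap.range (SimpleGraph.lapMatrix ℚ G).mulVecLin ≤ LinearMap.ker (sumL ℚ) := by
    rintro _ ⟨y, rfl⟩
    have : ∑ v, (SimpleGraph.lapMatrix ℚ G *ᵥ y) v = 0 := by
      simp only [mulVec, dotProduct]
      rw [Finset.sum_comm]
      refine Finset.sum_eq_zero fun u _ => ?_
      have hcol : ∑ v, SimpleGraph.lapMatrix ℚ G v u = 0 := by
        have hsym : ∀ v, SimpleGraph.lapMatrix ℚ G v u = SimpleGraph.lapMatrix ℚ G u v := by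
          intro v
          have := (SimpleGraph.isSymm_lapMatrix G (R := ℚ))
          exact (Matrix.IsSymm.apply this u v)
        simp_rw [hsym]
        have := congrFun (SimpleGraph.lapMatrix_mulVec_const_eq_zero G (R := ℚ)) u
        simpa [mulVec, dotProduct] using this
      rw [← Finset.sum_mul, hcol, zero_mul]
    simpa [sumL, LinearMap.mem_ker, Matrix.mulVecLin_apply] using this
  -- dimension count
  have hone : (fun _ => (1:ℚ) : V → ℚ) ≠ 0 := by
    intro h
    exact one_ne_zero (congrFun h v0)
  have hker1 : Module.finrank ℚ (LinearMap.ker (SimpleGraph.lapMatrix ℚ G).mulVecLin) = 1 := by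
    rw [ker_lapMatrix_rat G hG]
    exact finrank_span_singleton hone
  have hrsum : LinearMap.range (sumL ℚ (V := V)) = ⊤ := by
    rw [LinearMap.range_eq_top]
    intro c
    exact ⟨c • (Pi.single v0 1 : V → ℚ), by simp [sumL, Pi.single_apply, Finset.sum_ite_eq]⟩
  have e1 := LinearMap.finrank_range_add_finrank_ker (SimpleGraph.lapMatrix ℚ G).mulVecLin
  have e2 := LinearMap.finrank_range_add_finrank_ker (sumL ℚ (V := V))
  rw [hrsum] at e2
  rw [hker1] at e1
  have htop : Module.finrank ℚ (⊤ : Submodule ℚ ℚ) = 1 := by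
    rw [finrank_top]; exact Module.finrank_self ℚ
  rw [htop] at e2
  exact Submodule.eq_of_le_of_finrank_le hle (by omega)

lemma exists_smul_mem_range_lap (hG : G.Connected) (x : V → ℤ) (hx : ∑ v, x v = 0) :
    ∃ n : ℤ, n ≠ 0 ∧ n • x ∈ LinearMap.range (SimpleGraph.lapMatrix ℤ G).mulVecLin := by
  have hxq : (fun v => (x v : ℚ)) ∈ LinearMap.ker (sumL ℚ) := by
    simp only [sumL, LinearMap.mem_ker, LinearMap.coe_mk, AddHom.coe_mk]
    exact_mod_cast congrArg (fun z : ℤ => (z : ℚ)) hx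
  rw [← range_lapMatrix_rat G hG] at hxq
  obtain ⟨y, hy⟩ := hxq
  set n : ℤ := ∏ v, ((y v).den : ℤ) with hn
  have hnpos : 0 < n := Finset.prod_pos fun v _ => by exact_mod_cast (y v).pos
  have hint : ∀ v, ∃ m : ℤ, (m : ℚ) = (n : ℚ) * y v := by
    intro v
    refine ⟨(y v).num * ∏ w ∈ Finset.univ.erase v, ((y w).den : ℤ), ?_⟩
    push_cast
    rw [hn]
    push_cast
    rw [← Finset.mul_prod_erase _ _ (Finset.mem_univ v), mul_comm ((y v).den : ℚ),
      mul_assoc, rat_den_mul, mul_comm]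
  choose z hz using hint
  refine ⟨n, hnpos.ne', z, ?_⟩
  have hcast : ∀ a b, ((SimpleGraph.lapMatrix ℤ G a b : ℤ) : ℚ) = SimpleGraph.lapMatrix ℚ G a b := by
    intro a b
    simp only [SimpleGraph.lapMatrix, SimpleGraph.degMatrix, Matrix.sub_apply,
      Matrix.diagonal_apply, SimpleGraph.adjMatrix_apply]
    split_ifs <;> push_cast <;> ring
  ext v
  have : ((SimpleGraph.lapMatrix ℤ G *ᵥ z) v : ℚ) = ((n • x) v : ℚ) := by
    push_cast [mulVec, dotProduct, Pi.smul_apply, smul_eq_mul]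
    calc ∑ u, ((SimpleGraph.lapMatrix ℤ G v u : ℤ) : ℚ) * (z u : ℚ)
        = ∑ u, SimpleGraph.lapMatrix ℚ G v u * ((n : ℚ) * y u) := by
          refine Finset.sum_congr rfl fun u _ => by rw [hcast, hz]
      _ = (n : ℚ) * ∑ u, SimpleGraph.lapMatrix ℚ G v u * y u := by
          rw [Finset.mul_sum]; exact Finset.sum_congr rfl fun u _ => by ring
      _ = (n : ℚ) * (x v : ℚ) := by
          have := congrFun hy v
          rw [Matrix.mulVecLin_apply] at this
          rw [show ∑ u, SimpleGraph.lapMatrix ℚ G v u * y u =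
            (SimpleGraph.lapMatrix ℚ G *ᵥ y) v from rfl, this]
  exact_mod_cast this

end Aux

/-- **Cut and flow lattices and the critical group** (Bacher–de la Harpe–Nagnibeda):
for a connected graph `G`, the cut lattice `C = im_ℤ ∂ᵀ` and the flow lattice
`F = ker_ℤ ∂` intersect trivially, and `ℤ^E / (C + F)` is isomorphic to the critical
group `K(G)`, the torsion subgroup of `ℤ^V / im_ℤ L(G)`. -/
theorem cut_flow_critical {V : Type*} [Fintype V] [LinearOrder V]
    (G : SimpleGraph V) [DecidableRel G.Adj] (hG : G.Connected) :
    letI C : Submodule ℤ (G.edgeSet → ℤ) := LinearMap.range (signedInc G)ᵀ.mulVecLin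
    letI F : Submodule ℤ (G.edgeSet → ℤ) := LinearMap.ker (signedInc G).mulVecLin
    C ⊓ F = ⊥ ∧
      Nonempty (((G.edgeSet → ℤ) ⧸ (C ⊔ F)) ≃+
        AddCommGroup.torsion
          ((V → ℤ) ⧸ LinearMap.range (SimpleGraph.lapMatrix ℤ G).mulVecLin)) := by
  set C : Submodule ℤ (G.edgeSet → ℤ) := LinearMap.range (signedInc G)ᵀ.mulVecLin with hC
  set F : Submodule ℤ (G.edgeSet → ℤ) := LinearMap.ker (signedInc G).mulVecLin with hF
  set Lr : Submodule ℤ (V → ℤ) := LinearMap.range (SimpleGraph.lapMatrix ℤ G).mulVecLin with hLr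
  constructor
  · -- C ⊓ F = ⊥
    rw [eq_bot_iff]
    rintro x ⟨hxC, hxF⟩
    obtain ⟨y, hy⟩ := hxC
    have hxF' : signedInc G *ᵥ x = 0 := hxF
    have h1 : x = y ᵥ* signedInc G := by
      rw [← hy, Matrix.mulVecLin_apply, Matrix.mulVec_transpose]
    have hdot : x ⬝ᵥ x = 0 := by
      conv_lhs => rw [show x ⬝ᵥ x = (y ᵥ* signedInc G) ⬝ᵥ x from by rw [← h1]]
      rw [← Matrix.dotProduct_mulVec, hxF', dotProduct_zero]
    have hzero : x = 0 := by
      ext e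
      have := (Finset.sum_eq_zero_iff_of_nonneg
        (fun e _ => mul_self_nonneg (x e))).1 hdot e (Finset.mem_univ e)
      exact mul_self_eq_zero.1 this
    exact (Submodule.mem_bot ℤ).2 hzero
  · -- the isomorphism
    set f : (G.edgeSet → ℤ) →ₗ[ℤ] ((V → ℤ) ⧸ Lr) :=
      Lr.mkQ.comp (signedInc G).mulVecLin with hf
    have hLfact : (SimpleGraph.lapMatrix ℤ G).mulVecLin =
        (signedInc G).mulVecLin.comp (signedInc G)ᵀ.mulVecLin := by
      rw [← Matrix.mulVecLin_mul, signedInc_mul_transpose]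
    have hsum_range : ∀ z ∈ Lr, (∑ v, z v) = 0 := by
      rintro _ ⟨y, rfl⟩
      rw [hLfact]
      exact sum_mulVec_signedInc G _
    have hker : LinearMap.ker f = C ⊔ F := by
      apply le_antisymm
      · intro x hx
        have hx' : (signedInc G).mulVecLin x ∈ Lr := by
          have hx2 : Lr.mkQ ((signedInc G).mulVecLin x) = 0 := hx
          rwa [Submodule.mkQ_apply, Submodule.Quotient.mk_eq_zero] at hx2
        obtain ⟨y, hy⟩ := hx'
        refine Submodule.mem_sup.2 ⟨(signedInc G)ᵀ.mulVecLin y, ⟨y, rfl⟩,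
          x - (signedInc G)ᵀ.mulVecLin y, ?_, by abel⟩
        rw [hF, LinearMap.mem_ker, map_sub]
        rw [hLfact] at hy
        rw [LinearMap.comp_apply] at hy
        rw [hy, sub_self]
      · rw [sup_le_iff]
        constructor
        · rintro _ ⟨y, rfl⟩
          rw [LinearMap.mem_ker, hf, LinearMap.comp_apply, Submodule.mkQ_apply,
            Submodule.Quotient.mk_eq_zero]
          exact ⟨y, by rw [hLfact]; rfl⟩
        · intro x hx
          rw [LinearMap.mem_ker, hf, LinearMap.comp_apply, hF] at *
          rw [LinearMap.mem_ker.1 hx, map_zero]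
      
    have hrange : ∀ q, q ∈ LinearMap.range f ↔
        q ∈ AddCommGroup.torsion ((V → ℤ) ⧸ Lr) := by
      intro q
      constructor
      · rintro ⟨x, rfl⟩
        have hsum : ∑ v, ((signedInc G).mulVecLin x) v = 0 := sum_mulVec_signedInc G x
        obtain ⟨n, hn, hmem⟩ := exists_smul_mem_range_lap G hG _ hsum
        rw [AddCommGroup.mem_torsion, isOfFinAddOrder_iff_nsmul_eq_zero]
        refine ⟨n.natAbs, by positivity, ?_⟩
        have h0 : n • f x = 0 := by
          rw [hf, LinearMap.comp_apply, Submodule.mkQ_apply, ← Submodule.Quotient.mk_smul,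
            Submodule.Quotient.mk_eq_zero]
          exact hmem
        have h2 : (n.natAbs : ℤ) • f x = 0 := by
          rcases Int.natAbs_eq n with h | h
          · rw [← h]; exact h0
          · rw [h, neg_smul] at h0
            exact neg_eq_zero.1 h0
        simpa [natCast_zsmul] using h2
      · intro hq
        obtain ⟨v, rfl⟩ := Submodule.mkQ_surjective Lr q
        rw [AddCommGroup.mem_torsion, isOfFinAddOrder_iff_nsmul_eq_zero] at hq
        obtain ⟨n, hn, hnq⟩ := hq
        have hnv : (n : ℤ) • v ∈ Lr := by
          rw [← Submodule.Quotient.mk_eq_zero Lr, Submodule.Quotient.mk_smul, natCast_zsmul]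
          simpa [Submodule.mkQ_apply] using hnq
        have hvsum : ∑ w, v w = 0 := by
          have := hsum_range _ hnv
          have h2 : (n : ℤ) * ∑ w, v w = 0 := by
            rw [Finset.mul_sum]; simpa [Pi.smul_apply, smul_eq_mul] using this
          have hn0 : (n : ℤ) ≠ 0 := by exact_mod_cast hn.ne'
          exact (mul_eq_zero.1 h2).resolve_left hn0
        have hvmem : v ∈ LinearMap.range (signedInc G).mulVecLin := by
          rw [range_signedInc G hG]
          exact hvsum
        obtain ⟨x, hx⟩ := hvmem
        exact ⟨x, by rw [hf, LinearMap.comp_apply, hx]⟩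
    -- assemble
    refine ⟨?_⟩
    have e1 : ((G.edgeSet → ℤ) ⧸ (C ⊔ F)) ≃ₗ[ℤ] ((G.edgeSet → ℤ) ⧸ LinearMap.ker f) :=
      Submodule.quotEquivOfEq _ _ hker.symm
    have e2 := f.quotKerEquivRange
    have e3 : LinearMap.range f ≃+ AddCommGroup.torsion ((V → ℤ) ⧸ Lr) := by
      refine
        { toFun := fun x => ⟨x.1, (hrange x.1).1 x.2⟩
          invFun := fun x => ⟨x.1, (hrange x.1).2 x.2⟩
          left_inv := fun x => rfl
          right_inv := fun x => rfl
          map_add' := fun x y => rfl }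
    exact ((e1.trans e2).toAddEquiv.trans e3)
end

section
/- Let G be a shifted (threshold) graph on vertex set [n] = {1,…,n}: a simple graph such that whenever {i,j} is an edge with i < j, and i' ≤ i, j' ≤ j with i' < j', then {i',j'} is also an edge. Then the characteristic polynomial of the Laplacian L(G) equals ∏_{k=1}^{n} (X − d*_k), where d*_k = #{v ∈ [n] : deg_G(v) ≥ k}; that is, the Laplacian spectrum of G is the conjugate of its degree partition. -/
open Polynomial

namespace ThresholdAux

open Matrix Finset


lemma lap_apply {n : ℕ} (G : SimpleGraph (Fin n)) [DecidableRel G.Adj] (i j : Fin n) :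
    G.lapMatrix ℤ i j = if i = j then (G.degree i : ℤ) else if G.Adj i j then -1 else 0 := by
  by_cases h : i = j
  · subst h
    simp [SimpleGraph.lapMatrix, SimpleGraph.degMatrix, Matrix.diagonal]
  · simp only [SimpleGraph.lapMatrix, SimpleGraph.degMatrix, Matrix.sub_apply,
      Matrix.diagonal_apply_ne _ h, SimpleGraph.adjMatrix_apply, if_neg h, zero_sub]
    split_ifs <;> simp

def eqv (m : ℕ) : (Fin m ⊕ Fin 1) ≃ Fin (m + 1) where
  toFun := Sum.elim Fin.succ (fun _ => 0)
  invFun := fun i => Fin.cases (Sum.inr 0) Sum.inl i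
  left_inv := by
    rintro (i | j)
    · simp
    · simp [Subsingleton.elim j 0]
  right_inv := by
    intro i
    induction i using Fin.cases <;> simp

lemma card_filter_castSucc {m : ℕ} (p : Fin (m + 1) → Prop) [DecidablePred p] :
    (univ.filter p).card
      = (univ.filter (fun v : Fin m => p v.castSucc)).card + (if p (Fin.last m) then 1 else 0) := by
  rw [Finset.card_filter, Finset.card_filter, Fin.sum_univ_castSucc]

lemma card_filter_succ {m : ℕ} (p : Fin (m + 1) → Prop) [DecidablePred p] :
    (univ.filter p).card
      = (if p 0 then 1 else 0) + (univ.filter (fun v : Fin m => p v.succ)).card := by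
  rw [Finset.card_filter, Finset.card_filter, Fin.sum_univ_succ]

lemma sum_charmatrix_row {n : Type*} [Fintype n] [DecidableEq n] {R : Type*} [CommRing R]
    (M : Matrix n n R) (i : n) :
    ∑ j, charmatrix M i j = X - C (∑ j, M i j) := by
  simp only [charmatrix_apply, Finset.sum_sub_distrib, map_sum]
  congr 1
  rw [Finset.sum_eq_single i]
  · simp
  · intro b _ hb
    exact Matrix.diagonal_apply_ne _ (Ne.symm hb)
  · simp

lemma charmatrix_add_one {n : Type*} [Fintype n] [DecidableEq n] (M : Matrix n n ℤ) :
    charmatrix (M + 1) = (charmatrix M).map (aeval (X - 1 : ℤ[X])).toRingHom := by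
  ext i j
  by_cases h : i = j
  · subst h
    simp [Matrix.one_apply, map_sub, aeval_X, aeval_C, algebraMap_eq]
    ring
  · simp [Matrix.one_apply, h, aeval_C, algebraMap_eq]

set_option maxHeartbeats 1000000 in
theorem caseB (m : ℕ) (G : SimpleGraph (Fin (m+2))) [instG : DecidableRel G.Adj]
    (hdom : ∀ v : Fin (m+2), v ≠ 0 → G.Adj 0 v)
    (ih : ∀ (G : SimpleGraph (Fin (m+1))) [DecidableRel G.Adj],
      (∀ i j i' j' : Fin (m+1),
        G.Adj i j → i < j → i' ≤ i → j' ≤ j → i' < j' → G.Adj i' j') →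
      (SimpleGraph.lapMatrix ℤ G).charpoly =
        ∏ k ∈ Finset.Icc 1 (m+1),
          (X - C ((Finset.univ.filter (fun v : Fin (m+1) => k ≤ G.degree v)).card : ℤ)))
    (hshift : ∀ i j i' j' : Fin (m+2),
        G.Adj i j → i < j → i' ≤ i → j' ≤ j → i' < j' → G.Adj i' j') :
    (SimpleGraph.lapMatrix ℤ G).charpoly =
      ∏ k ∈ Finset.Icc 1 (m+2),
        (X - C ((Finset.univ.filter (fun v : Fin (m+2) => k ≤ G.degree v)).card : ℤ)) := by
  set G' : SimpleGraph (Fin (m+1)) := SimpleGraph.comap Fin.succ G with hG'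
  haveI instG' : DecidableRel G'.Adj := fun a b => instG _ _
  have hshift' : ∀ i j i' j' : Fin (m+1),
      G'.Adj i j → i < j → i' ≤ i → j' ≤ j → i' < j' → G'.Adj i' j' := by
    intro i j i' j' hadj hij hi hj hij'
    exact hshift _ _ _ _ hadj (by simpa using hij) (by simpa using hi)
      (by simpa using hj) (by simpa using hij')
  -- degrees
  have hdeg0 : G.degree 0 = m + 1 := by
    have h1 := SimpleGraph.degree_eq_sum_if_adj (R := ℕ) G 0
    rw [Nat.cast_id] at h1
    rw [h1, Fin.sum_univ_succ, if_neg (G.irrefl)]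
    have : ∀ u : Fin (m+1), (if G.Adj 0 u.succ then 1 else 0) = 1 := fun u =>
      if_pos (hdom _ (Fin.succ_ne_zero u))
    simp [this]
  have hdegsucc : ∀ v : Fin (m+1), G.degree v.succ = G'.degree v + 1 := by
    intro v
    have h1 := SimpleGraph.degree_eq_sum_if_adj (R := ℕ) G v.succ
    have h2 := SimpleGraph.degree_eq_sum_if_adj (R := ℕ) G' v
    rw [Nat.cast_id] at h1 h2
    rw [h1, h2, Fin.sum_univ_succ, if_pos ((hdom _ (Fin.succ_ne_zero v)).symm)]
    rw [add_comm]
    congr 1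
    refine Finset.sum_congr rfl fun u _ => ?_
    simp [hG', SimpleGraph.comap_adj]
  set L' := SimpleGraph.lapMatrix ℤ G' with hL'
  have hrow : ∀ i, ∑ j, L' i j = 0 := by
    intro i
    have h := congrFun (SimpleGraph.lapMatrix_mulVec_const_eq_zero (R := ℤ) G') i
    simpa [Matrix.mulVec, dotProduct] using h
  -- block decomposition
  have hblocks : Matrix.reindex (eqv (m+1)).symm (eqv (m+1)).symm (G.lapMatrix ℤ)
      = Matrix.fromBlocks (L' + 1) (Matrix.of fun _ _ => (-1 : ℤ))
          (Matrix.of fun _ _ => (-1 : ℤ)) (Matrix.of fun _ _ => ((m : ℤ) + 1)) := by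
    ext a b
    rcases a with i | i <;> rcases b with j | j <;>
      simp only [Matrix.reindex_apply, Matrix.submatrix_apply, Equiv.symm_symm,
        eqv, Equiv.coe_fn_mk, Sum.elim_inl, Sum.elim_inr,
        Matrix.fromBlocks_apply₁₁, Matrix.fromBlocks_apply₁₂,
        Matrix.fromBlocks_apply₂₁, Matrix.fromBlocks_apply₂₂, Matrix.of_apply]
    · -- inl inl
      rw [lap_apply]
      by_cases h : i = j
      · subst h
        rw [if_pos rfl]
        have : (L' + 1) i i = L' i i + 1 := by simp [Matrix.one_apply]
        rw [this, hL', lap_apply, if_pos rfl, hdegsucc]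
        push_cast
        ring
      · have hne : i.succ ≠ j.succ := fun hh => h (Fin.succ_injective _ hh)
        rw [if_neg hne]
        have : (L' + 1) i j = L' i j := by simp [Matrix.one_apply, h]
        rw [this, hL', lap_apply, if_neg h]
        simp [hG', SimpleGraph.comap_adj]
    · -- inl inr
      rw [lap_apply, if_neg (Fin.succ_ne_zero i)]
      rw [if_pos ((hdom _ (Fin.succ_ne_zero i)).symm)]
    · -- inr inl
      rw [lap_apply, if_neg (Ne.symm (Fin.succ_ne_zero j))]
      rw [if_pos (hdom _ (Fin.succ_ne_zero j))]
    · -- inr inr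
      rw [lap_apply, if_pos rfl, hdeg0]
      push_cast
      ring
  -- the charpoly of G' via IH
  have hIH : L'.charpoly = ∏ k ∈ Finset.Icc 1 (m+1),
      (X - C ((univ.filter (fun v : Fin (m+1) => k ≤ G'.degree v)).card : ℤ)) :=
    ih G' hshift'
  set q : ℤ[X] := ∏ k ∈ Finset.Icc 1 (m+1),
      (X - C (((univ.filter (fun v : Fin (m+1) => k ≤ G'.degree v)).card : ℤ) + 1)) with hq
  have hψ : (L' + 1).charpoly = q := by
    rw [Matrix.charpoly, charmatrix_add_one, ← RingHom.mapMatrix_apply, ← RingHom.map_det,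
      ← Matrix.charpoly, hIH, hq, map_prod]
    refine Finset.prod_congr rfl fun k _ => ?_
    simp only [map_sub, AlgHom.toRingHom_eq_coe, RingHom.coe_coe, aeval_X, aeval_C,
      algebraMap_eq, map_add, C_1]
    ring
  have hq0 : q ≠ 0 := by
    rw [hq]
    exact Finset.prod_ne_zero_iff.mpr fun k _ => X_sub_C_ne_zero _
  -- move to the fraction field
  set K := FractionRing (ℤ[X])
  set φ : ℤ[X] →+* K := algebraMap (ℤ[X]) K with hφ
  have hφinj : Function.Injective φ := IsFractionRing.injective (ℤ[X]) K
  have hX1 : (X - 1 : ℤ[X]) ≠ 0 := by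
    have := Polynomial.X_sub_C_ne_zero (R := ℤ) 1
    simpa using this
  have hx1 : φ (X - 1) ≠ 0 := fun h => hX1 (hφinj (by simpa using h))
  set Ak : Matrix (Fin (m+1)) (Fin (m+1)) K := (charmatrix (L' + 1)).map φ with hAk
  have hdetAk : Ak.det = φ q := by
    rw [hAk, ← RingHom.mapMatrix_apply, ← RingHom.map_det, ← Matrix.charpoly, hψ]
  haveI : Invertible Ak := Ak.invertibleOfIsUnitDet (by
    rw [hdetAk]
    exact isUnit_iff_ne_zero.mpr fun h => hq0 (hφinj (by simpa using h)))
  -- row sums of Ak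
  have hAkrow : ∀ i, ∑ j, Ak i j = φ (X - 1) := by
    intro i
    rw [hAk]
    have : ∑ j, ((charmatrix (L' + 1)).map φ) i j = φ (∑ j, charmatrix (L' + 1) i j) := by
      rw [map_sum]; rfl
    rw [this, sum_charmatrix_row]
    have hC1 : (C (1:ℤ) : ℤ[X]) = 1 := C_1
    congr 1
    have : ∑ j, (L' + 1) i j = 1 := by
      have h1 : ∑ j, (L' + 1) i j = (∑ j, L' i j) + ∑ j, (1 : Matrix (Fin (m+1)) (Fin (m+1)) ℤ) i j := by
        rw [← Finset.sum_add_distrib]; rfl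
      rw [h1, hrow i]
      simp [Matrix.one_apply]
    rw [this, hC1]
  have hmulrow : Ak *ᵥ (fun _ => (φ (X - 1))⁻¹) = fun _ => (1 : K) := by
    funext i
    simp only [Matrix.mulVec, dotProduct]
    rw [← Finset.sum_mul, hAkrow i, mul_inv_cancel₀ hx1]
  have hinvrow : (⅟Ak) *ᵥ (fun _ => (1 : K)) = fun _ => (φ (X - 1))⁻¹ := by
    calc (⅟Ak) *ᵥ (fun _ => (1 : K))
        = (⅟Ak) *ᵥ (Ak *ᵥ (fun _ => (φ (X - 1))⁻¹)) := by rw [hmulrow]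
      _ = (⅟Ak * Ak) *ᵥ (fun _ => (φ (X - 1))⁻¹) := by rw [Matrix.mulVec_mulVec]
      _ = _ := by rw [invOf_mul_self, Matrix.one_mulVec]
  -- assemble the determinant computation
  have hstep1 : (G.lapMatrix ℤ).charpoly
      = (Matrix.fromBlocks (L' + 1)
          (Matrix.of fun (_ : Fin (m+1)) (_ : Fin 1) => (-1:ℤ))
          (Matrix.of fun (_ : Fin 1) (_ : Fin (m+1)) => (-1:ℤ))
          (Matrix.of fun (_ : Fin 1) (_ : Fin 1) => ((m:ℤ)+1))).charpoly := by
    rw [← hblocks, Matrix.charpoly_reindex]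
  have hstep2 : φ ((G.lapMatrix ℤ).charpoly)
      = Matrix.det (Matrix.fromBlocks Ak
          (Matrix.of fun (_ : Fin (m+1)) (_ : Fin 1) => (1:K))
          (Matrix.of fun (_ : Fin 1) (_ : Fin (m+1)) => (1:K))
          (Matrix.of fun (_ : Fin 1) (_ : Fin 1) => φ (X - C ((m:ℤ)+1)))) := by
    rw [hstep1, Matrix.charpoly, RingHom.map_det, RingHom.mapMatrix_apply, charmatrix_fromBlocks,
      Matrix.fromBlocks_map]
    refine congrArg Matrix.det ?_
    ext i j
    rcases i with i | i <;> rcases j with j | j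
    · rfl
    · simp [Matrix.map_apply]
    · simp [Matrix.map_apply]
    · have hij : i = j := Subsingleton.elim i j
      subst hij
      simp [Matrix.map_apply, charmatrix_apply_eq, map_sub]
  have hdet : φ ((G.lapMatrix ℤ).charpoly)
      = φ q * (φ (X - C ((m:ℤ)+1)) - ((m : K) + 1) * (φ (X - 1))⁻¹) := by
    rw [hstep2, Matrix.det_fromBlocks₁₁, hdetAk]
    congr 1
    have hcol : ((⅟Ak * (Matrix.of fun (_ : Fin (m+1)) (_ : Fin 1) => (1:K)) :
          Matrix (Fin (m+1)) (Fin 1) K))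
        = Matrix.of fun _ _ => (φ (X - 1))⁻¹ := by
      ext j z
      have h := congrFun hinvrow j
      simpa [Matrix.mul_apply, Matrix.mulVec, dotProduct] using h
    rw [Matrix.det_fin_one, Matrix.sub_apply, Matrix.mul_assoc, hcol]
    congr 1
    simp only [Matrix.mul_apply, Matrix.of_apply, one_mul]
    rw [Finset.sum_const, Finset.card_univ, Fintype.card_fin, nsmul_eq_mul]
    push_cast
    ring
  have hCm : φ (C ((m:ℤ) + 1)) = ((m : K) + 1) := by
    have h1 : (C ((m:ℤ) + 1) : ℤ[X]) = ((m : ℤ[X]) + 1) := by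
      rw [map_add, _root_.map_one, map_natCast]
    rw [h1, map_add, _root_.map_one, map_natCast]
  have hkey : (G.lapMatrix ℤ).charpoly * (X - 1) = q * (X * (X - C ((m:ℤ)+2))) := by
    apply hφinj
    rw [_root_.map_mul, hdet, _root_.map_mul, _root_.map_mul, mul_assoc]
    congr 1
    rw [sub_mul, mul_assoc, inv_mul_cancel₀ hx1, mul_one, ← _root_.map_mul, ← hCm, ← map_sub,
      ← _root_.map_mul]
    congr 1
    have h2 : (C ((m:ℤ)+2) : ℤ[X]) = C ((m:ℤ)+1) + 1 := by
      rw [show ((m:ℤ)+2) = ((m:ℤ)+1)+1 by ring, map_add, _root_.map_one]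
    rw [h2]
    ring
  -- counting
  set c : ℕ → ℕ := fun k => (univ.filter (fun v : Fin (m+2) => k ≤ G.degree v)).card with hcdef
  set c' : ℕ → ℕ := fun k => (univ.filter (fun v : Fin (m+1) => k ≤ G'.degree v)).card with hc'def
  have hcsplit : ∀ k, c k
      = (if k ≤ m+1 then 1 else 0)
        + (univ.filter (fun v : Fin (m+1) => k ≤ G'.degree v + 1)).card := by
    intro k
    simp only [hcdef]
    rw [card_filter_succ (fun v : Fin (m+2) => k ≤ G.degree v)]
    simp only [hdeg0, hdegsucc]
  have hc1 : c 1 = m + 2 := by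
    rw [hcsplit 1, if_pos (by omega)]
    have h1 : (univ.filter (fun v : Fin (m+1) => 1 ≤ G'.degree v + 1)) = univ :=
      Finset.filter_true_of_mem (fun v _ => by omega)
    rw [h1, Finset.card_univ, Fintype.card_fin]
    omega
  have hmid : ∀ k, 1 ≤ k → k ≤ m → c (k+1) = c' k + 1 := by
    intro k h1 h2
    rw [hcsplit (k+1), if_pos (by omega)]
    have h3 : (univ.filter (fun v : Fin (m+1) => k+1 ≤ G'.degree v + 1)).card = c' k := by
      simp only [hc'def]
      congr 1
      ext v
      simp only [Finset.mem_filter, Finset.mem_univ, true_and]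
      omega
    omega
  have hdeg'lt : ∀ v : Fin (m+1), G'.degree v < m + 1 := by
    intro v
    have := G'.degree_lt_card_verts v
    rwa [Fintype.card_fin] at this
  have htop : c (m+2) = 0 := by
    rw [hcsplit (m+2), if_neg (by omega), zero_add, Finset.card_eq_zero,
      Finset.filter_eq_empty_iff]
    intro v _
    have := hdeg'lt v
    omega
  have hc'top : c' (m+1) = 0 := by
    simp only [hc'def]
    rw [Finset.card_eq_zero, Finset.filter_eq_empty_iff]
    intro v _
    have := hdeg'lt v
    omega
  -- final polynomial manipulation
  show (G.lapMatrix ℤ).charpoly = ∏ k ∈ Finset.Icc 1 (m+2), (X - C ((c k : ℤ)))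
  apply mul_right_cancel₀ hX1
  rw [hkey]
  have hq' : q = ∏ k ∈ Finset.Icc 1 (m+1), (X - C ((c' k : ℤ) + 1)) := hq
  have hsplit1 : Finset.Icc 1 (m+2) = insert 1 (Finset.Icc 2 (m+2)) := by
    ext x
    simp only [Finset.mem_Icc, Finset.mem_insert]
    omega
  rw [hsplit1, Finset.prod_insert (by simp)]
  have hmap : Finset.Icc 2 (m+2) = (Finset.Icc 1 (m+1)).map (addRightEmbedding 1) := by
    rw [Finset.map_add_right_Icc]
  rw [hmap, Finset.prod_map]
  simp only [addRightEmbedding_apply]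
  rw [Finset.prod_Icc_succ_top (by omega : 1 ≤ m + 1), hq',
    Finset.prod_Icc_succ_top (by omega : 1 ≤ m + 1)]
  have hQ : ∏ k ∈ Finset.Icc 1 m, (X - C ((c' k : ℤ) + 1))
      = ∏ k ∈ Finset.Icc 1 m, (X - C ((c (k+1) : ℤ))) := by
    refine Finset.prod_congr rfl fun k hk => ?_
    obtain ⟨h1, h2⟩ := Finset.mem_Icc.mp hk
    rw [hmid k h1 h2]
    push_cast
    ring
  rw [hQ, hc1, hc'top, htop]
  push_cast
  rw [C_1, C_0]
  ring


theorem caseA (m : ℕ) (G : SimpleGraph (Fin (m+1))) [instG : DecidableRel G.Adj]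
    (hshift : ∀ i j i' j' : Fin (m+1),
        G.Adj i j → i < j → i' ≤ i → j' ≤ j → i' < j' → G.Adj i' j')
    (hiso : ∀ w, ¬ G.Adj (Fin.last m) w)
    (ih : ∀ (G : SimpleGraph (Fin m)) [DecidableRel G.Adj],
      (∀ i j i' j' : Fin m,
        G.Adj i j → i < j → i' ≤ i → j' ≤ j → i' < j' → G.Adj i' j') →
      (SimpleGraph.lapMatrix ℤ G).charpoly =
        ∏ k ∈ Finset.Icc 1 m,
          (X - C ((Finset.univ.filter (fun v : Fin m => k ≤ G.degree v)).card : ℤ))) :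
    (SimpleGraph.lapMatrix ℤ G).charpoly =
      ∏ k ∈ Finset.Icc 1 (m+1),
        (X - C ((Finset.univ.filter (fun v : Fin (m+1) => k ≤ G.degree v)).card : ℤ)) := by
  set G' : SimpleGraph (Fin m) := SimpleGraph.comap Fin.castSucc G with hG'
  haveI instG' : DecidableRel G'.Adj := fun a b => instG _ _
  have hshift' : ∀ i j i' j' : Fin m,
      G'.Adj i j → i < j → i' ≤ i → j' ≤ j → i' < j' → G'.Adj i' j' := by
    intro i j i' j' hadj hij hi hj hij'
    exact hshift _ _ _ _ hadj (by simpa using hij) (by simpa using hi)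
      (by simpa using hj) (by simpa using hij')
  have hdegcast : ∀ v : Fin m, G.degree v.castSucc = G'.degree v := by
    intro v
    have h1 := SimpleGraph.degree_eq_sum_if_adj (R := ℕ) G v.castSucc
    have h2 := SimpleGraph.degree_eq_sum_if_adj (R := ℕ) G' v
    rw [Nat.cast_id] at h1 h2
    have hnl : ¬ G.Adj v.castSucc (Fin.last m) := fun h => hiso _ h.symm
    rw [h1, h2, Fin.sum_univ_castSucc, if_neg hnl, add_zero]
    refine Finset.sum_congr rfl fun u _ => ?_
    simp [hG', SimpleGraph.comap_adj]
  have hdeglast : G.degree (Fin.last m) = 0 := by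
    have h1 := SimpleGraph.degree_eq_sum_if_adj (R := ℕ) G (Fin.last m)
    rw [Nat.cast_id] at h1
    rw [h1]
    exact Finset.sum_eq_zero fun j _ => by simp [hiso j]
  -- block decomposition
  have hblocks : Matrix.reindex (finSumFinEquiv (m := m) (n := 1)).symm finSumFinEquiv.symm
      (G.lapMatrix ℤ)
      = Matrix.fromBlocks (G'.lapMatrix ℤ) 0 0 0 := by
    ext a b
    rcases a with i | i <;> rcases b with j | j <;>
      simp only [Matrix.reindex_apply, Matrix.submatrix_apply, Equiv.symm_symm,
        finSumFinEquiv_apply_left, finSumFinEquiv_apply_right,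
        Matrix.fromBlocks_apply₁₁, Matrix.fromBlocks_apply₁₂,
        Matrix.fromBlocks_apply₂₁, Matrix.fromBlocks_apply₂₂]
    · -- inl inl
      have hca : ∀ u : Fin m, Fin.castAdd 1 u = u.castSucc := fun u => rfl
      rw [lap_apply, lap_apply, hca, hca]
      by_cases h : i = j
      · subst h
        simp [hdegcast]
      · have hne : (i.castSucc) ≠ (j.castSucc) := by
          simpa [Fin.ext_iff] using fun hh => h (Fin.ext hh)
        rw [if_neg hne, if_neg h]
        simp [hG', SimpleGraph.comap_adj]
    · -- inl inr
      have hl : (Fin.natAdd m j) = Fin.last m := by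
        ext; simp [Fin.ext_iff, Fin.val_eq_zero j]
      rw [hl, lap_apply]
      have h1 : Fin.castAdd 1 i ≠ Fin.last m := Fin.ne_of_lt (Fin.castSucc_lt_last i)
      have h2 : ¬ G.Adj (Fin.castAdd 1 i) (Fin.last m) := fun h => hiso _ h.symm
      simp [h1, h2]
    · -- inr inl
      have hl : (Fin.natAdd m i) = Fin.last m := by
        ext; simp [Fin.ext_iff, Fin.val_eq_zero i]
      rw [hl, lap_apply]
      have h1 : Fin.last m ≠ Fin.castAdd 1 j := (Fin.ne_of_lt (Fin.castSucc_lt_last j)).symm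
      simp [h1, hiso]
    · -- inr inr
      have hli : (Fin.natAdd m i) = Fin.last m := by ext; simp [Fin.ext_iff, Fin.val_eq_zero i]
      have hlj : (Fin.natAdd m j) = Fin.last m := by ext; simp [Fin.ext_iff, Fin.val_eq_zero j]
      rw [hli, hlj, lap_apply]
      simp [hdeglast]
  have hp : (G.lapMatrix ℤ).charpoly = (G'.lapMatrix ℤ).charpoly * X := by
    calc (G.lapMatrix ℤ).charpoly
        = (Matrix.reindex (finSumFinEquiv (m := m) (n := 1)).symm finSumFinEquiv.symm
            (G.lapMatrix ℤ)).charpoly := (Matrix.charpoly_reindex _ _).symm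
      _ = (Matrix.fromBlocks (G'.lapMatrix ℤ) (0 : Matrix (Fin m) (Fin 1) ℤ)
            (0 : Matrix (Fin 1) (Fin m) ℤ) (0 : Matrix (Fin 1) (Fin 1) ℤ)).charpoly := by
          rw [hblocks]
      _ = (G'.lapMatrix ℤ).charpoly * (0 : Matrix (Fin 1) (Fin 1) ℤ).charpoly := by
          rw [Matrix.charpoly_fromBlocks_zero₂₁]
      _ = (G'.lapMatrix ℤ).charpoly * X := by
          congr 1
          rw [Matrix.charpoly, Matrix.det_fin_one]
          simp
  -- degree counts
  have hctop : ((univ.filter (fun v : Fin (m+1) => m+1 ≤ G.degree v)).card : ℤ) = 0 := by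
    norm_cast
    rw [Finset.card_eq_zero, Finset.filter_eq_empty_iff]
    intro v _
    have := G.degree_lt_card_verts v
    rw [Fintype.card_fin] at this
    omega
  have hck : ∀ k, 1 ≤ k →
      (univ.filter (fun v : Fin (m+1) => k ≤ G.degree v)).card
        = (univ.filter (fun v : Fin m => k ≤ G'.degree v)).card := by
    intro k hk
    rw [card_filter_castSucc]
    have : ¬ k ≤ G.degree (Fin.last m) := by rw [hdeglast]; omega
    rw [if_neg this, add_zero]
    congr 1
    ext v
    simp [hdegcast]
  have hprod : ∏ k ∈ Finset.Icc 1 m,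
      (X - C ((univ.filter (fun v : Fin (m+1) => k ≤ G.degree v)).card : ℤ))
      = ∏ k ∈ Finset.Icc 1 m,
      (X - C ((univ.filter (fun v : Fin m => k ≤ G'.degree v)).card : ℤ)) :=
    Finset.prod_congr rfl fun k hk => by rw [hck k (Finset.mem_Icc.mp hk).1]
  rw [hp, ih G' hshift', Finset.prod_Icc_succ_top (by omega : 1 ≤ m + 1), hctop, hprod]
  simp


theorem aux (n : ℕ) :
    ∀ (G : SimpleGraph (Fin n)) [DecidableRel G.Adj],
      (∀ i j i' j' : Fin n,
        G.Adj i j → i < j → i' ≤ i → j' ≤ j → i' < j' → G.Adj i' j') →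
      (SimpleGraph.lapMatrix ℤ G).charpoly =
        ∏ k ∈ Finset.Icc 1 n,
          (X - C ((Finset.univ.filter (fun v : Fin n => k ≤ G.degree v)).card : ℤ)) := by
  induction n with
  | zero =>
      intro G _ _
      rw [Finset.Icc_eq_empty (by omega), Finset.prod_empty, Matrix.charpoly,
        Matrix.det_isEmpty]
  | succ m ih =>
      intro G instG hshift
      by_cases hiso : ∀ w, ¬ G.Adj (Fin.last m) w
      · exact caseA m G hshift hiso (fun G' _ h => ih G' h)
      · push_neg at hiso
        obtain ⟨w, hw⟩ := hiso
        have hwne : w ≠ Fin.last m := (G.ne_of_adj hw).symm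
        have hwlt : w < Fin.last m := lt_of_le_of_ne (Fin.le_last w) hwne
        have hdom : ∀ v : Fin (m+1), v ≠ 0 → G.Adj 0 v := fun v hv =>
          hshift w (Fin.last m) 0 v hw.symm hwlt (Fin.zero_le w) (Fin.le_last v)
            (Fin.pos_iff_ne_zero.mpr hv)
        obtain ⟨m', rfl⟩ : ∃ k, m = k + 1 := by
          cases m with
          | zero => exact absurd (Fin.ext (by omega)) hwne
          | succ k => exact ⟨k, rfl⟩
        exact caseB m' G hdom (fun G' _ h => ih G' h) hshift

end ThresholdAux


/-- **Laplacian integrality of shifted (threshold) graphs** (Hammer–Kelmans, Merris):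
if `G` is a shifted graph on `[n]` (whenever `{i,j}` is an edge with `i < j`, and
`i' ≤ i`, `j' ≤ j`, `i' < j'`, then `{i',j'}` is an edge), then the characteristic
polynomial of the Laplacian is `∏_{k=1}^n (X - d*_k)`, where
`d*_k = #{v : deg v ≥ k}` is the `k`-th part of the conjugate degree partition. -/
theorem threshold_laplacian_spectrum (n : ℕ) (G : SimpleGraph (Fin n))
    [DecidableRel G.Adj]
    (hshift : ∀ i j i' j' : Fin n,
      G.Adj i j → i < j → i' ≤ i → j' ≤ j → i' < j' → G.Adj i' j') :
    (SimpleGraph.lapMatrix ℤ G).charpoly =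
      ∏ k ∈ Finset.Icc 1 n,
        (X - C ((Finset.univ.filter (fun v : Fin n => k ≤ G.degree v)).card : ℤ)) := by
  exact ThresholdAux.aux n G hshift
end
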